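/- arXiv:1505.07807 — 5 statements merged into one kernel-verified Lean document; each statement's English description precedes it below -/
import Mathlib

section
/- Let (X,d) be a metric space with integer-valued metric satisfying the local rank condition, let S be the family of all d-splits of X (so that d = d₀ + ∑_{S ∈ S} α_S δ_S with d₀ split-prime), let λ_S ∈ [0, α_S] for every S ∈ S, and set d₁ := d − ∑_{S ∈ S} λ_S δ_S. Then: (1) every f ∈ E(X,d) can be written as f(x) = f₁(x) + ∑_{S ∈ S} λ_S f_S(x) for all x ∈ X, with f₁ ∈ E(X,d₁), f_S ∈ E(X,δ_S) for each S ∈ S, and all sums convergent; (2) conversely, for any split S = {A,B} of X and any λ > 0 such that d = d₁' + λ·δ_S with d₁' a pseudometric, if every element of E(X,d) can be written as g₁ + λ·g_S with g₁ ∈ E(X,d₁') and g_S ∈ E(X,δ_S), then S is a d-split of X and λ ≤ α_S. -/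
open Set Function

noncomputable section

variable {X : Type*}

/-- `d` is a pseudometric on `X`. -/
def IsPseudometric (d : X → X → ℝ) : Prop :=
  (∀ x, d x x = 0) ∧ (∀ x y, d x y = d y x) ∧ ∀ x y z, d x z ≤ d x y + d y z

/-- `d` is a metric on `X`. -/
def IsMetric (d : X → X → ℝ) : Prop :=
  IsPseudometric d ∧ ∀ x y, d x y = 0 → x = y

/-- `d` is integer-valued. -/
def IsIntegerValued (d : X → X → ℝ) : Prop := ∀ x y, ∃ n : ℤ, d x y = (n : ℝ)

/-- The quantity `β^d` associated to the four points `a, a', b, b'`. -/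
def betaIdx (d : X → X → ℝ) (a a' b b' : X) : ℝ :=
  (max (max (d a b + d a' b') (d a' b + d a b')) (d a a' + d b b') - d a a' - d b b') / 2

/-- The isolation index `α^d_{{A,B}}` of the pair `{A,B}`. -/
def isolIdx (d : X → X → ℝ) (A B : Set X) : ℝ :=
  sInf {r : ℝ | ∃ a ∈ A, ∃ a' ∈ A, ∃ b ∈ B, ∃ b' ∈ B, r = betaIdx d a a' b b'}

/-- `{A, B}` is a partial split of `X`. -/
def IsPartialSplit (A B : Set X) : Prop := A.Nonempty ∧ B.Nonempty ∧ Disjoint A B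

/-- `{A, B}` is a split of `X`. -/
def IsSplit (A B : Set X) : Prop := IsPartialSplit A B ∧ A ∪ B = univ

/-- `{A, B}` is a `d`-split of `X`. -/
def IsDSplit (d : X → X → ℝ) (A B : Set X) : Prop := IsSplit A B ∧ 0 < isolIdx d A B

open Classical in
/-- The split pseudometric `δ_S` of the split `{A, Aᶜ}`. -/
def splitDist (A : Set X) (x y : X) : ℝ := if x ∈ A ↔ y ∈ A then 0 else 1

/-- `Δ(X, ρ)`: functions with `f x + f y ≥ ρ x y` for all `x, y`. -/
def DeltaSet (ρ : X → X → ℝ) : Set (X → ℝ) := {f | ∀ x y, ρ x y ≤ f x + f y}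

/-- Isbell's injective hull `E(X, d)`: the extremal functions, i.e. those with
`f x = sup_y (d x y - f y)` for every `x`. -/
def ExtSet (d : X → X → ℝ) : Set (X → ℝ) :=
  {f | ∀ x, IsLUB {r : ℝ | ∃ y, r = d x y - f y} (f x)}

/-- `E'(X, d)`: elements of `Δ(X, d)` such that every point lies in some pair of `A(f)`. -/
def ExtSet' (d : X → X → ℝ) : Set (X → ℝ) :=
  {f | f ∈ DeltaSet d ∧ ∀ x, ∃ y, f x + f y = d x y}

/-- The set `A(f)` of (ordered) pairs where equality holds. -/
def eqSet (d : X → X → ℝ) (f : X → ℝ) : Set (X × X) := {p | f p.1 + f p.2 = d p.1 p.2}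

/-- The direction space of the affine subspace `H(A)`; its dimension is `rank A`. -/
def dirSubmodule (A : Set (X × X)) : Submodule ℝ (X → ℝ) where
  carrier := {h | ∀ p ∈ A, h p.1 + h p.2 = 0}
  add_mem' := by
    intro a b ha hb p hp
    have h1 := ha p hp
    have h2 := hb p hp
    simp only [Pi.add_apply]
    linarith
  zero_mem' := by intro p _; simp
  smul_mem' := by
    intro c a ha p hp
    have h1 := ha p hp
    simp only [Pi.smul_apply, smul_eq_mul]
    linear_combination c * h1

/-- The local rank condition. -/
def LRC (d : X → X → ℝ) : Prop :=
  ∀ f ∈ ExtSet d, ∃ ε : ℝ, 0 < ε ∧ ∃ N : ℕ,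
    ∀ g ∈ ExtSet' d, (∀ x, |f x - g x| < ε) →
      Module.rank ℝ (dirSubmodule (eqSet d g)) ≤ (N : Cardinal)

/-- `d` is totally split-decomposable: `d = ∑_{S a d-split} α_S δ_S`, where each
separating `d`-split `{A, Aᶜ}` is counted once via its part `A` containing `x`. -/
def TSD (d : X → X → ℝ) : Prop :=
  ∀ x y, d x y = ∑ᶠ A ∈ {A : Set X | IsDSplit d A Aᶜ ∧ x ∈ A ∧ y ∉ A}, isolIdx d A Aᶜ

/-- The cell `[f]` of `f ∈ E(X,d)`: all `g ∈ Δ(X,d)` with `A(f) ⊆ A(g)`. -/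
def cellOf (d : X → X → ℝ) (f : X → ℝ) : Set (X → ℝ) :=
  {g | g ∈ DeltaSet d ∧ ∀ x y, f x + f y = d x y → g x + g y = d x y}

lemma aux_max3_intro_left {a b c L : ℝ} (h : c + L ≤ a) : L ≤ max (max a b) c - c := by
  have : a ≤ max (max a b) c := le_trans (le_max_left a b) (le_max_left _ _)
  linarith

lemma aux_max3_intro_right {a b c L : ℝ} (h : c + L ≤ b) : L ≤ max (max a b) c - c := by
  have : b ≤ max (max a b) c := le_trans (le_max_right a b) (le_max_left _ _)
  linarith

lemma aux_max3_intro_bot {a b c L : ℝ} (h : L ≤ 0) : L ≤ max (max a b) c - c := by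
  have : c ≤ max (max a b) c := le_max_right _ _
  linarith

lemma aux_max3_split {a b c L : ℝ} (h : L ≤ max (max a b) c - c) :
    c + L ≤ a ∨ c + L ≤ b ∨ L ≤ 0 := by
  rcases max_cases (max a b) c with ⟨h1, _⟩ | ⟨h1, h2⟩
  · rcases max_cases a b with ⟨h3, _⟩ | ⟨h3, _⟩
    · left; rw [h1, h3] at h; linarith
    · right; left; rw [h1, h3] at h; linarith
  · right; right; rw [h1] at h; linarith

/-- `aquad ρ L a a' b b'` : the four-point inequality stating `β ≥ L`. -/
def aquad (ρ : X → X → ℝ) (L : ℝ) (a a' b b' : X) : Prop :=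
  2*L ≤ max (max (ρ a b + ρ a' b') (ρ a' b + ρ a b')) (ρ a a' + ρ b b') - (ρ a a' + ρ b b')

lemma aquad_iff_beta {ρ : X → X → ℝ} {L : ℝ} {a a' b b' : X} :
    aquad ρ L a a' b b' ↔ L ≤ betaIdx ρ a a' b b' := by
  unfold aquad betaIdx; constructor <;> intro h <;> linarith

lemma aquad_comm {ρ : X → X → ℝ} (hsym : ∀ x y, ρ x y = ρ y x) {L : ℝ} {a a' b b' : X}
    (h : aquad ρ L a a' b b') : aquad ρ L b b' a a' := by
  unfold aquad at *
  rcases aux_max3_split h with h' | h' | h'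
  · exact aux_max3_intro_left (by rw [hsym b a, hsym b' a']; linarith)
  · exact aux_max3_intro_right (by rw [hsym b a', hsym b' a]; linarith)
  · exact aux_max3_intro_bot h'

set_option maxHeartbeats 3200000 in
lemma aux_core {Dxx' Dyy' Dxy Dxy' Dx'y Dx'y' Dxe Dx'e Dye Dy'e lA lB : ℝ}
    (hlA : 0 ≤ lA) (hlB : 0 ≤ lB)
    (h0 : 2*lB ≤ max (max (Dxy + Dx'y') (Dx'y + Dxy')) (Dxx' + Dyy') - (Dxx' + Dyy'))
    (h1 : 2*lB ≤ max (max (Dxy + Dx'e) (Dx'y + Dxe)) (Dxx' + Dye) - (Dxx' + Dye))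
    (h2 : 2*lB ≤ max (max (Dxy' + Dx'e) (Dx'y' + Dxe)) (Dxx' + Dy'e) - (Dxx' + Dy'e))
    (hS1 : 2*lA ≤ max (max (Dxy + Dy'e) (Dxy' + Dye)) (Dxe + Dyy') - (Dxe + Dyy'))
    (hS2 : 2*lA ≤ max (max (Dx'y + Dy'e) (Dx'y' + Dye)) (Dx'e + Dyy') - (Dx'e + Dyy')) :
    2*lB ≤ max (max (Dxy + Dx'y' - 2*lA) (Dx'y + Dxy' - 2*lA)) (Dxx' + Dyy') - (Dxx' + Dyy') := by
  rcases aux_max3_split h1 with h1' | h1' | h1' <;>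
  rcases aux_max3_split h2 with h2' | h2' | h2' <;>
  rcases aux_max3_split hS1 with h3' | h3' | h3' <;>
  rcases aux_max3_split hS2 with h4' | h4' | h4' <;>
  first
    | exact aux_max3_intro_bot (by linarith)
    | exact aux_max3_intro_left (by linarith)
    | exact aux_max3_intro_right (by linarith)
    | (rcases le_total (Dxy + Dx'y') (Dx'y + Dxy') with hle | hle
       · exact aux_max3_intro_right (by linarith)
       · exact aux_max3_intro_left (by linarith))
    | (rcases aux_max3_split h0 with h0' | h0' | h0'
       · exact aux_max3_intro_left (by linarith)
       · exact aux_max3_intro_right (by linarith)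
       · exact aux_max3_intro_bot (by linarith))

open Classical in
lemma sd_eq_zero {A : Set X} {x y : X} (h : x ∈ A ↔ y ∈ A) : splitDist A x y = 0 := by
  unfold splitDist; rw [if_pos h]

lemma sd_eq_one {A : Set X} {x y : X} (h : ¬(x ∈ A ↔ y ∈ A)) : splitDist A x y = 1 := by
  unfold splitDist; rw [if_neg h]

lemma sd_comm (A : Set X) (x y : X) : splitDist A x y = splitDist A y x := by
  unfold splitDist
  by_cases h : x ∈ A ↔ y ∈ A
  · rw [if_pos h, if_pos h.symm]
  · rw [if_neg h, if_neg (fun h' => h h'.symm)]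

lemma sd_self (A : Set X) (x : X) : splitDist A x x = 0 := sd_eq_zero Iff.rfl

lemma aligned {ρ : X → X → ℝ} (hsym : ∀ u v, ρ u v = ρ v u) {A B : Set X} (hne : A ≠ B)
    {lA lB : ℝ} (hlA : 0 ≤ lA) (hlB : 0 ≤ lB)
    (hA : ∀ p ∈ A, ∀ p' ∈ A, ∀ q ∈ Aᶜ, ∀ q' ∈ Aᶜ, aquad ρ lA p p' q q')
    (hB : ∀ p ∈ B, ∀ p' ∈ B, ∀ q ∈ Bᶜ, ∀ q' ∈ Bᶜ, aquad ρ lB p p' q q')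
    {x x' y y' : X} (hxB : x ∈ B) (hx'B : x' ∈ B) (hyB : y ∈ Bᶜ) (hy'B : y' ∈ Bᶜ)
    (hxA : x ∈ A) (hx'A : x' ∈ A) (hyA : y ∈ Aᶜ) (hy'A : y' ∈ Aᶜ) :
    2*lB ≤ max (max (ρ x y + ρ x' y' - 2*lA) (ρ x' y + ρ x y' - 2*lA)) (ρ x x' + ρ y y')
      - (ρ x x' + ρ y y') := by
  obtain ⟨e, he⟩ : ∃ e, ¬(e ∈ A ↔ e ∈ B) := by
    by_contra h
    push_neg at h
    exact hne (Set.ext fun z => h z)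
  rcases (by tauto : (e ∈ A ∧ e ∉ B) ∨ (e ∉ A ∧ e ∈ B)) with ⟨heA, heB⟩ | ⟨heA, heB⟩
  · have q0 := hB x hxB x' hx'B y hyB y' hy'B
    have q1 := hB x hxB x' hx'B y hyB e heB
    have q2 := hB x hxB x' hx'B y' hy'B e heB
    have s1 := hA x hxA e heA y hyA y' hy'A
    have s2 := hA x' hx'A e heA y hyA y' hy'A
    unfold aquad at q0 q1 q2 s1 s2
    rw [hsym e y', hsym e y, add_comm (ρ y e) (ρ x y')] at s1
    rw [hsym e y', hsym e y, add_comm (ρ y e) (ρ x' y')] at s2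
    exact aux_core hlA hlB q0 q1 q2 s1 s2
  · have q0 := aquad_comm hsym (hB x hxB x' hx'B y hyB y' hy'B)
    have q1 := aquad_comm hsym (hB x hxB e heB y hyB y' hy'B)
    have q2 := aquad_comm hsym (hB x' hx'B e heB y hyB y' hy'B)
    have s1 := aquad_comm hsym (hA x hxA x' hx'A y hyA e heA)
    have s2 := aquad_comm hsym (hA x hxA x' hx'A y' hy'A e heA)
    unfold aquad at q0 q1 q2 s1 s2
    rw [hsym e x', hsym e x, add_comm (ρ x e) (ρ y x')] at s1
    rw [hsym e x', hsym e x, add_comm (ρ x e) (ρ y' x')] at s2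
    have hc := aux_core hlA hlB q0 q1 q2 s1 s2
    rcases aux_max3_split hc with h | h | h
    · exact aux_max3_intro_left (by
        have e1 := hsym y x; have e2 := hsym y' x'
        have e3 := hsym y y'; have e4 := hsym x x'
        linarith)
    · exact aux_max3_intro_right (by
        have e1 := hsym y' x; have e2 := hsym y x'
        have e3 := hsym y y'; have e4 := hsym x x'
        linarith)
    · exact aux_max3_intro_bot h

lemma aux_max3_transfer {a b c a2 b2 c2 L : ℝ} (h : L ≤ max (max a b) c - c)
    (ha : c + L ≤ a → c2 + L ≤ a2) (hb : c + L ≤ b → c2 + L ≤ b2) :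
    L ≤ max (max a2 b2) c2 - c2 := by
  rcases aux_max3_split h with h | h | h
  · exact aux_max3_intro_left (ha h)
  · exact aux_max3_intro_right (hb h)
  · exact aux_max3_intro_bot h

lemma preserve {ρ : X → X → ℝ} (hsym : ∀ u v, ρ u v = ρ v u) {A B : Set X} (hne : A ≠ B)
    (hne' : Aᶜ ≠ B) {lA lB : ℝ} (hlA : 0 ≤ lA) (hlB : 0 ≤ lB)
    (hA : ∀ p ∈ A, ∀ p' ∈ A, ∀ q ∈ Aᶜ, ∀ q' ∈ Aᶜ, aquad ρ lA p p' q q')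
    (hB : ∀ p ∈ B, ∀ p' ∈ B, ∀ q ∈ Bᶜ, ∀ q' ∈ Bᶜ, aquad ρ lB p p' q q')
    {x x' y y' : X} (hx : x ∈ B) (hx' : x' ∈ B) (hy : y ∈ Bᶜ) (hy' : y' ∈ Bᶜ) :
    aquad (fun u v => ρ u v - lA * splitDist A u v) lB x x' y y' := by
  have q0 := hB x hx x' hx' y hy y' hy'
  unfold aquad at q0 ⊢
  have hA' : ∀ p ∈ Aᶜ, ∀ p' ∈ Aᶜ, ∀ q ∈ Aᶜᶜ, ∀ q' ∈ Aᶜᶜ, aquad ρ lA p p' q q' := by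
    intro p hp p' hp' q hq q' hq'
    exact aquad_comm hsym (hA q (by simpa using hq) q' (by simpa using hq') p hp p' hp')
  by_cases hxa : x ∈ A <;> by_cases hx'a : x' ∈ A <;> by_cases hya : y ∈ A <;>
    by_cases hy'a : y' ∈ A <;>
    simp only [splitDist, hxa, hx'a, hya, hy'a, iff_true, true_iff, iff_false, false_iff,
      if_true, if_false, not_true, not_false_iff, mul_one, mul_zero, sub_zero,
      not_not, ite_true, ite_false, not_false_eq_true] <;>
    first
      | exact aux_max3_transfer q0 (fun h => by linarith) (fun h => by linarith)
      | exact aux_max3_transfer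
          (aligned hsym hne hlA hlB hA hB hx hx' hy hy' hxa hx'a hya hy'a)
          (fun h => by linarith) (fun h => by linarith)
      | exact aux_max3_transfer
          (aligned hsym hne' hlA hlB hA' hB hx hx' hy hy' hxa hx'a
            (by simpa using hya) (by simpa using hy'a))
          (fun h => by linarith) (fun h => by linarith)

lemma ext_delta {ρ : X → X → ℝ} {f : X → ℝ} (hf : f ∈ ExtSet ρ) :
    ∀ u v, ρ u v ≤ f u + f v := by
  intro u v
  have h := (hf u).1 ⟨v, rfl⟩
  linarith

open Classical in
lemma peel {ρ : X → X → ℝ} {A : Set X} (hA : A.Nonempty) (hAc : Aᶜ.Nonempty)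
    {l : ℝ} (hl : 0 ≤ l)
    (hq : ∀ p ∈ A, ∀ p' ∈ A, ∀ q ∈ Aᶜ, ∀ q' ∈ Aᶜ, aquad ρ l p p' q q')
    {f : X → ℝ} (hf : f ∈ ExtSet ρ) :
    ∃ ν : ℝ, 0 ≤ ν ∧ ν ≤ l ∧
      (fun x => f x - (if x ∈ A then ν else l - ν)) ∈
        ExtSet (fun u v => ρ u v - l * splitDist A u v) := by
  have hΔ : ∀ u v, ρ u v ≤ f u + f v := ext_delta hf
  set SA : Set ℝ := {r : ℝ | ∃ p ∈ A, ∃ p' ∈ A, r = (f p + f p' - ρ p p') / 2} with hSA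
  set SB : Set ℝ := {r : ℝ | ∃ p ∈ Aᶜ, ∃ p' ∈ Aᶜ, r = (f p + f p' - ρ p p') / 2} with hSB
  obtain ⟨a0, ha0⟩ := hA
  obtain ⟨b0, hb0⟩ := hAc
  have neSA : SA.Nonempty := ⟨_, a0, ha0, a0, ha0, rfl⟩
  have neSB : SB.Nonempty := ⟨_, b0, hb0, b0, hb0, rfl⟩
  have bddSA : BddBelow SA := ⟨0, by rintro r ⟨p, hp, p', hp', rfl⟩; have := hΔ p p'; linarith⟩
  have bddSB : BddBelow SB := ⟨0, by rintro r ⟨p, hp, p', hp', rfl⟩; have := hΔ p p'; linarith⟩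
  have hμA0 : 0 ≤ sInf SA :=
    le_csInf neSA (by rintro r ⟨p, hp, p', hp', rfl⟩; have := hΔ p p'; linarith)
  have hμB0 : 0 ≤ sInf SB :=
    le_csInf neSB (by rintro r ⟨p, hp, p', hp', rfl⟩; have := hΔ p p'; linarith)
  have hpair : ∀ r ∈ SA, ∀ s ∈ SB, l ≤ r + s := by
    rintro r ⟨p, hp, p', hp', rfl⟩ s ⟨q, hqm, q', hq'm, rfl⟩
    have hb := hq p hp p' hp' q hqm q' hq'm
    have d1 := hΔ p q; have d2 := hΔ p' q'; have d3 := hΔ p' q; have d4 := hΔ p q'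
    have d5 := hΔ p p'; have d6 := hΔ q q'
    rcases aux_max3_split hb with h | h | h <;> linarith
  have hkey : l - sInf SB ≤ sInf SA := by
    apply le_csInf neSA
    intro r hr
    have h1 : l - r ≤ sInf SB := le_csInf neSB fun s hs => by have := hpair r hr s hs; linarith
    linarith
  set ν : ℝ := min l (sInf SA) with hν
  have hν0 : 0 ≤ ν := le_min hl hμA0
  have hνl : ν ≤ l := min_le_left _ _
  have hGA : ∀ {u v : X}, u ∈ A → v ∈ A → 2 * ν ≤ f u + f v - ρ u v := by
    intro u v hu hv
    have h1 : sInf SA ≤ (f u + f v - ρ u v) / 2 := csInf_le bddSA ⟨u, hu, v, hv, rfl⟩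
    have h2 := min_le_right l (sInf SA)
    linarith
  have hGB : ∀ {u v : X}, u ∉ A → v ∉ A → 2 * (l - ν) ≤ f u + f v - ρ u v := by
    intro u v hu hv
    have h1 : sInf SB ≤ (f u + f v - ρ u v) / 2 := csInf_le bddSB ⟨u, hu, v, hv, rfl⟩
    have h2 : l - ν ≤ sInf SB := by
      rcases le_total l (sInf SA) with h | h
      · rw [hν, min_eq_left h]; simpa using hμB0
      · rw [hν, min_eq_right h]; linarith
    linarith
  refine ⟨ν, hν0, hνl, ?_⟩
  intro x
  constructor
  · rintro r ⟨y, rfl⟩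
    show ρ x y - l * splitDist A x y - (f y - (if y ∈ A then ν else l - ν)) ≤
      f x - (if x ∈ A then ν else l - ν)
    by_cases hxA : x ∈ A <;> by_cases hyA : y ∈ A
    · rw [sd_eq_zero (by tauto), if_pos hxA, if_pos hyA]; have := hGA hxA hyA; linarith
    · rw [sd_eq_one (by tauto), if_pos hxA, if_neg hyA]; have := hΔ x y; linarith
    · rw [sd_eq_one (by tauto), if_neg hxA, if_pos hyA]; have := hΔ x y; linarith
    · rw [sd_eq_zero (by tauto), if_neg hxA, if_neg hyA]; have := hGB hxA hyA; linarith
  · intro c hc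
    have hub : ∀ y, ρ x y - f y ≤ c + (if x ∈ A then ν else l - ν) := by
      intro y
      have h : ρ x y - l * splitDist A x y - (f y - (if y ∈ A then ν else l - ν)) ≤ c :=
        hc ⟨y, rfl⟩
      by_cases hxA : x ∈ A <;> by_cases hyA : y ∈ A
      · rw [sd_eq_zero (by tauto), if_pos hyA] at h; rw [if_pos hxA]; linarith
      · rw [sd_eq_one (by tauto), if_neg hyA] at h; rw [if_pos hxA]; linarith
      · rw [sd_eq_one (by tauto), if_pos hyA] at h; rw [if_neg hxA]; linarith
      · rw [sd_eq_zero (by tauto), if_neg hyA] at h; rw [if_neg hxA]; linarith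
    have hx2 : f x ≤ c + (if x ∈ A then ν else l - ν) :=
      (hf x).2 (by rintro r ⟨y, rfl⟩; exact hub y)
    show f x - (if x ∈ A then ν else l - ν) ≤ c
    linarith

lemma aquad_congr {ρ₁ ρ₂ : X → X → ℝ} (h : ∀ u v, ρ₁ u v = ρ₂ u v) {L : ℝ} {a a' b b' : X} :
    aquad ρ₁ L a a' b b' ↔ aquad ρ₂ L a a' b b' := by
  unfold aquad; simp only [h]

def rhoF (d : X → X → ℝ) (lam : Set X → ℝ) (𝒯 : Set (Set X)) (S : Finset ↥𝒯) : X → X → ℝ :=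
  fun x y => d x y - ∑ a ∈ S, lam ↑a * splitDist (↑a : Set X) x y

lemma rhoF_symm {d : X → X → ℝ} (hsym : ∀ x y, d x y = d y x) (lam : Set X → ℝ)
    (𝒯 : Set (Set X)) (S : Finset ↥𝒯) : ∀ x y, rhoF d lam 𝒯 S x y = rhoF d lam 𝒯 S y x := by
  intro x y
  unfold rhoF
  rw [hsym x y]
  congr 1
  exact Finset.sum_congr rfl fun a _ => by rw [sd_comm]

open Classical in
lemma rhoF_insert {d : X → X → ℝ} {lam : Set X → ℝ} {𝒯 : Set (Set X)} {S : Finset ↥𝒯}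
    {a : ↥𝒯} (ha : a ∉ S) :
    ∀ x y, rhoF d lam 𝒯 (insert a S) x y
      = rhoF d lam 𝒯 S x y - lam ↑a * splitDist (↑a : Set X) x y := by
  classical
  intro x y
  unfold rhoF
  rw [Finset.sum_insert ha]
  ring

lemma good_lemma {d : X → X → ℝ} (hsym : ∀ x y, d x y = d y x) {𝒯 : Set (Set X)}
    {lam : Set X → ℝ}
    (h2 : ∀ a : ↥𝒯, 0 ≤ lam ↑a)
    (h3 : ∀ b : ↥𝒯, ∀ p ∈ (↑b : Set X), ∀ p' ∈ (↑b : Set X), ∀ q ∈ (↑b : Set X)ᶜ,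
      ∀ q' ∈ (↑b : Set X)ᶜ, aquad d (lam ↑b) p p' q q')
    (hdist : ∀ a b : ↥𝒯, a ≠ b → (↑a : Set X) ≠ ↑b ∧ (↑a : Set X)ᶜ ≠ ↑b)
    (S : Finset ↥𝒯) :
    ∀ b : ↥𝒯, b ∉ S → ∀ p ∈ (↑b : Set X), ∀ p' ∈ (↑b : Set X), ∀ q ∈ (↑b : Set X)ᶜ,
      ∀ q' ∈ (↑b : Set X)ᶜ, aquad (rhoF d lam 𝒯 S) (lam ↑b) p p' q q' := by
  classical
  induction S using Finset.induction_on with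
  | empty =>
    intro b _ p hp p' hp' q hq q' hq'
    have he : ∀ u v, rhoF d lam 𝒯 (∅ : Finset ↥𝒯) u v = d u v := by
      intro u v; unfold rhoF; simp
    rw [aquad_congr he]
    exact h3 b p hp p' hp' q hq q' hq'
  | @insert a S ha IH =>
    intro b hb p hp p' hp' q hq q' hq'
    have hba : b ≠ a := fun h => hb (h ▸ Finset.mem_insert_self a S)
    have hbS : b ∉ S := fun h => hb (Finset.mem_insert_of_mem h)
    rw [aquad_congr (rhoF_insert ha)]
    exact preserve (rhoF_symm hsym lam 𝒯 S) (hdist a b (Ne.symm hba)).1 (hdist a b (Ne.symm hba)).2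
      (h2 a) (h2 b) (IH a ha) (IH b hbS) hp hp' hq hq'

open Classical in
lemma findecomp {d : X → X → ℝ} (hsym : ∀ x y, d x y = d y x) {𝒯 : Set (Set X)}
    {lam : Set X → ℝ}
    (h1 : ∀ a : ↥𝒯, (↑a : Set X).Nonempty ∧ ((↑a : Set X)ᶜ).Nonempty)
    (h2 : ∀ a : ↥𝒯, 0 ≤ lam ↑a)
    (h3 : ∀ b : ↥𝒯, ∀ p ∈ (↑b : Set X), ∀ p' ∈ (↑b : Set X), ∀ q ∈ (↑b : Set X)ᶜ,
      ∀ q' ∈ (↑b : Set X)ᶜ, aquad d (lam ↑b) p p' q q')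
    (hdist : ∀ a b : ↥𝒯, a ≠ b → (↑a : Set X) ≠ ↑b ∧ (↑a : Set X)ᶜ ≠ ↑b)
    {f : X → ℝ} (hf : f ∈ ExtSet d) (S : Finset ↥𝒯) :
    ∃ ν : ↥𝒯 → ℝ, (∀ a, 0 ≤ ν a ∧ ν a ≤ lam ↑a) ∧
      (fun x => f x - ∑ a ∈ S, (if x ∈ (↑a : Set X) then ν a else lam ↑a - ν a)) ∈
        ExtSet (rhoF d lam 𝒯 S) := by
  classical
  induction S using Finset.induction_on with
  | empty =>
    refine ⟨fun _ => 0, fun a => ⟨le_refl _, h2 a⟩, ?_⟩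
    have e1 : (fun x => f x - ∑ a ∈ (∅ : Finset ↥𝒯),
        (if x ∈ (↑a : Set X) then (0:ℝ) else lam ↑a - 0)) = f := by
      funext x; simp
    rw [e1, show rhoF d lam 𝒯 (∅ : Finset ↥𝒯) = d from by funext x y; unfold rhoF; simp]
    exact hf
  | @insert a S ha IH =>
    obtain ⟨ν, hνbox, hmem⟩ := IH
    obtain ⟨t, ht0, htl, hmem'⟩ := peel (h1 a).1 (h1 a).2 (h2 a)
      (good_lemma hsym h2 h3 hdist S a ha) hmem
    refine ⟨Function.update ν a t, ?_, ?_⟩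
    · intro b
      by_cases hb : b = a
      · subst hb; rw [Function.update_self]; exact ⟨ht0, htl⟩
      · rw [Function.update_of_ne hb]; exact hνbox b
    · have e1 : (fun x => f x - ∑ b ∈ insert a S,
          (if x ∈ (↑b : Set X) then Function.update ν a t b
            else lam ↑b - Function.update ν a t b))
          = (fun x => (f x - ∑ b ∈ S, (if x ∈ (↑b : Set X) then ν b else lam ↑b - ν b))
              - (if x ∈ (↑a : Set X) then t else lam ↑a - t)) := by
        funext x
        rw [Finset.sum_insert ha, Function.update_self]
        have e2 : ∑ b ∈ S, (if x ∈ (↑b : Set X) then Function.update ν a t b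
            else lam ↑b - Function.update ν a t b)
            = ∑ b ∈ S, (if x ∈ (↑b : Set X) then ν b else lam ↑b - ν b) := by
          refine Finset.sum_congr rfl fun b hb => ?_
          rw [Function.update_of_ne (fun h => ha (by rw [← h]; exact hb))]
        rw [e2]; ring
      have e3 : rhoF d lam 𝒯 (insert a S) =
          (fun u v => rhoF d lam 𝒯 S u v - lam ↑a * splitDist (↑a : Set X) u v) := by
        funext u v; exact rhoF_insert ha u v
      rw [e1, e3]
      exact hmem'

open Classical in
def ctermD (A : Set X) (lA : ℝ) (t : ℝ) (x y : X) : ℝ :=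
  (if x ∈ A then t else lA - t) + (if y ∈ A then t else lA - t) - lA * splitDist A x y

lemma ctermD_nonneg {A : Set X} {lA t : ℝ} (h0 : 0 ≤ t) (h1 : t ≤ lA) (x y : X) :
    0 ≤ ctermD A lA t x y := by
  unfold ctermD
  by_cases hx : x ∈ A <;> by_cases hy : y ∈ A
  · rw [sd_eq_zero (by tauto), if_pos hx, if_pos hy]; linarith
  · rw [sd_eq_one (by tauto), if_pos hx, if_neg hy]; linarith
  · rw [sd_eq_one (by tauto), if_neg hx, if_pos hy]; linarith
  · rw [sd_eq_zero (by tauto), if_neg hx, if_neg hy]; linarith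

lemma cont_aux_ite {P : Prop} [Decidable P] (c : ℝ) :
    Continuous (fun t : ℝ => if P then t else c - t) := by
  by_cases h : P
  · simp only [if_pos h]; fun_prop
  · simp only [if_neg h]; fun_prop

lemma ctermD_cont (A : Set X) (lA : ℝ) (x y : X) :
    Continuous (fun t : ℝ => ctermD A lA t x y) := by
  classical
  have he : (fun t : ℝ => ctermD A lA t x y) =
      (fun t : ℝ => ((if x ∈ A then t else lA - t) + (if y ∈ A then t else lA - t))
        - lA * splitDist A x y) := rfl
  rw [he]
  exact ((cont_aux_ite lA).add (cont_aux_ite lA)).sub continuous_const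

open Classical in
lemma sd_extremal {A : Set X} (hA : A.Nonempty) (hAc : Aᶜ.Nonempty) {s : ℝ}
    (h0 : 0 ≤ s) (h1 : s ≤ 1) :
    (fun x => if x ∈ A then s else 1 - s) ∈ ExtSet (splitDist A) := by
  obtain ⟨a0, ha0⟩ := hA
  obtain ⟨b0, hb0⟩ := hAc
  intro x
  constructor
  · rintro r ⟨y, rfl⟩
    show splitDist A x y - (if y ∈ A then s else 1 - s) ≤ (if x ∈ A then s else 1 - s)
    by_cases hx : x ∈ A <;> by_cases hy : y ∈ A
    · rw [sd_eq_zero (by tauto), if_pos hx, if_pos hy]; try linarith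
    · rw [sd_eq_one (by tauto), if_pos hx, if_neg hy]; try linarith
    · rw [sd_eq_one (by tauto), if_neg hx, if_pos hy]; try linarith
    · rw [sd_eq_zero (by tauto), if_neg hx, if_neg hy]; try linarith
  · intro c hc
    by_cases hx : x ∈ A
    · have h := hc ⟨b0, rfl⟩
      simp only [mem_setOf_eq] at h
      rw [sd_eq_one (by tauto), if_neg hb0] at h
      show (if x ∈ A then s else 1 - s) ≤ c
      rw [if_pos hx]; linarith
    · have h := hc ⟨a0, rfl⟩
      simp only [mem_setOf_eq] at h
      rw [sd_eq_one (by tauto), if_pos ha0] at h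
      show (if x ∈ A then s else 1 - s) ≤ c
      rw [if_neg hx]; linarith

open Classical in
def Fsplit (𝒯 : Set (Set X)) (lam : Set X → ℝ) (ν : ↥𝒯 → ℝ) (A : Set X) (x : X) : ℝ :=
  if hA : A ∈ 𝒯 then
    (if x ∈ A then (if lam A = 0 then 0 else ν ⟨A, hA⟩ / lam A)
     else 1 - (if lam A = 0 then 0 else ν ⟨A, hA⟩ / lam A))
  else 0

open Classical in
lemma Fsplit_mul {𝒯 : Set (Set X)} {lam : Set X → ℝ} {ν : ↥𝒯 → ℝ}
    (hbox : ∀ a : ↥𝒯, 0 ≤ ν a ∧ ν a ≤ lam ↑a) (a : ↥𝒯) (x : X) :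
    lam ↑a * Fsplit 𝒯 lam ν ↑a x = (if x ∈ (↑a : Set X) then ν a else lam ↑a - ν a) := by
  unfold Fsplit
  rw [dif_pos a.2]
  have ha : (⟨↑a, a.2⟩ : ↥𝒯) = a := Subtype.coe_eta a a.2
  rw [ha]
  by_cases hl : lam ↑a = 0
  · have hν : ν a = 0 := le_antisymm (hl ▸ (hbox a).2) (hbox a).1
    by_cases hx : x ∈ (↑a : Set X) <;> simp [hx, hl, hν]
  · by_cases hx : x ∈ (↑a : Set X)
    · simp only [if_pos hx, if_neg hl]
      try field_simp
    · simp only [if_neg hx, if_neg hl]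
      try field_simp
      try ring

open Classical in
lemma part1_main {d : X → X → ℝ} (hsym : ∀ x y, d x y = d y x) (hdiag : ∀ x, d x x = 0)
    {𝒯 : Set (Set X)} {lam : Set X → ℝ}
    (h1 : ∀ a : ↥𝒯, (↑a : Set X).Nonempty ∧ ((↑a : Set X)ᶜ).Nonempty)
    (h2 : ∀ a : ↥𝒯, 0 ≤ lam ↑a)
    (h3 : ∀ b : ↥𝒯, ∀ p ∈ (↑b : Set X), ∀ p' ∈ (↑b : Set X), ∀ q ∈ (↑b : Set X)ᶜ,
      ∀ q' ∈ (↑b : Set X)ᶜ, aquad d (lam ↑b) p p' q q')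
    (hdist : ∀ a b : ↥𝒯, a ≠ b → (↑a : Set X) ≠ ↑b ∧ (↑a : Set X)ᶜ ≠ ↑b)
    {d₁ : X → X → ℝ}
    (hd₁ : ∀ x y : X,
      HasSum (fun A : ↥𝒯 => lam ↑A * splitDist (↑A : Set X) x y) (d x y - d₁ x y)) :
    ∀ f ∈ ExtSet d, ∃ f₁ ∈ ExtSet d₁, ∃ F : Set X → X → ℝ,
      (∀ A ∈ 𝒯, F A ∈ ExtSet (splitDist A)) ∧
      ∀ x, HasSum (fun A : ↥𝒯 => lam ↑A * F (↑A) x) (f x - f₁ x) := by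
  classical
  intro f hf
  -- the compact box
  set K : Set (↥𝒯 → ℝ) := Set.pi Set.univ (fun a => Icc 0 (lam ↑a)) with hKdef
  have hK : IsCompact K := isCompact_univ_pi fun a => isCompact_Icc
  -- the closed constraint sets
  set Z : Finset ↥𝒯 × X × X → Set (↥𝒯 → ℝ) := fun i =>
    {ν | ∑ a ∈ i.1, ctermD (↑a : Set X) (lam ↑a) (ν a) i.2.1 i.2.2
      ≤ f i.2.1 + f i.2.2 - d i.2.1 i.2.2} with hZdef
  have hZc : ∀ i, IsClosed (Z i) := by
    intro i
    apply isClosed_le _ continuous_const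
    apply continuous_finset_sum
    intro a _
    exact (ctermD_cont (↑a : Set X) (lam ↑a) i.2.1 i.2.2).comp (continuous_apply a)
  -- finite intersections are nonempty
  have hne : ∀ t : Finset (Finset ↥𝒯 × X × X), (K ∩ ⋂ i ∈ t, Z i).Nonempty := by
    intro t
    set S : Finset ↥𝒯 := t.sup Prod.fst with hSdef
    obtain ⟨ν, hbox, hmem⟩ := findecomp hsym h1 h2 h3 hdist hf S
    have hcon : ∀ x y, ∑ a ∈ S, ctermD (↑a : Set X) (lam ↑a) (ν a) x y
        ≤ f x + f y - d x y := by
      intro x y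
      have hd' := ext_delta hmem x y
      unfold rhoF at hd'
      have hrw : ∑ a ∈ S, ctermD (↑a : Set X) (lam ↑a) (ν a) x y
          = (∑ a ∈ S, (if x ∈ (↑a : Set X) then ν a else lam ↑a - ν a))
            + (∑ a ∈ S, (if y ∈ (↑a : Set X) then ν a else lam ↑a - ν a))
            - ∑ a ∈ S, lam ↑a * splitDist (↑a : Set X) x y := by
        rw [← Finset.sum_add_distrib, ← Finset.sum_sub_distrib]
        rfl
      rw [hrw]
      linarith
    refine ⟨fun a => if a ∈ S then ν a else 0, ?_, ?_⟩
    · intro a _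
      show (if a ∈ S then ν a else 0) ∈ Icc 0 (lam ↑a)
      by_cases ha : a ∈ S
      · rw [if_pos ha]; exact ⟨(hbox a).1, (hbox a).2⟩
      · rw [if_neg ha]; exact ⟨le_refl _, h2 a⟩
    · rw [Set.mem_iInter₂]
      intro i hi
      have hsub : i.1 ⊆ S := Finset.le_sup (f := Prod.fst) hi
      show ∑ a ∈ i.1, ctermD (↑a : Set X) (lam ↑a)
          ((fun a => if a ∈ S then ν a else 0) a) i.2.1 i.2.2
        ≤ f i.2.1 + f i.2.2 - d i.2.1 i.2.2
      have he : ∑ a ∈ i.1, ctermD (↑a : Set X) (lam ↑a)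
            ((fun a => if a ∈ S then ν a else 0) a) i.2.1 i.2.2
          = ∑ a ∈ i.1, ctermD (↑a : Set X) (lam ↑a) (ν a) i.2.1 i.2.2 := by
        refine Finset.sum_congr rfl fun a ha => ?_
        simp only [if_pos (hsub ha)]
      rw [he]
      calc ∑ a ∈ i.1, ctermD (↑a : Set X) (lam ↑a) (ν a) i.2.1 i.2.2
          ≤ ∑ a ∈ S, ctermD (↑a : Set X) (lam ↑a) (ν a) i.2.1 i.2.2 :=
            Finset.sum_le_sum_of_subset_of_nonneg hsub
              (fun a _ _ => ctermD_nonneg (hbox a).1 (hbox a).2 _ _)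
        _ ≤ _ := hcon _ _
  -- extract a point in the full intersection
  obtain ⟨ν, hνK, hνZ⟩ : (K ∩ ⋂ i, Z i).Nonempty := by
    by_contra h
    rw [Set.not_nonempty_iff_eq_empty] at h
    obtain ⟨t, ht⟩ := hK.elim_finite_subfamily_closed Z hZc h
    exact (hne t).ne_empty ht
  have hbox : ∀ a : ↥𝒯, 0 ≤ ν a ∧ ν a ≤ lam ↑a := by
    intro a
    have := hνK a (Set.mem_univ a)
    exact ⟨this.1, this.2⟩
  have hZall : ∀ (u : Finset ↥𝒯) (x y : X),
      ∑ a ∈ u, ctermD (↑a : Set X) (lam ↑a) (ν a) x y ≤ f x + f y - d x y := by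
    intro u x y
    have := Set.mem_iInter.mp hνZ (u, x, y)
    exact this
  -- summability of the G-terms
  have hGnn : ∀ (x : X) (a : ↥𝒯),
      0 ≤ (if x ∈ (↑a : Set X) then ν a else lam ↑a - ν a) := by
    intro x a
    by_cases hx : x ∈ (↑a : Set X)
    · rw [if_pos hx]; exact (hbox a).1
    · rw [if_neg hx]; linarith [(hbox a).2]
  have hsumG : ∀ x : X,
      Summable (fun a : ↥𝒯 => (if x ∈ (↑a : Set X) then ν a else lam ↑a - ν a)) := by
    intro x
    apply summable_of_sum_le (c := f x) (hGnn x)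
    intro u
    have h := hZall u x x
    have he : ∑ a ∈ u, ctermD (↑a : Set X) (lam ↑a) (ν a) x x
        = 2 * ∑ a ∈ u, (if x ∈ (↑a : Set X) then ν a else lam ↑a - ν a) := by
      rw [Finset.mul_sum]
      refine Finset.sum_congr rfl fun a _ => ?_
      unfold ctermD
      rw [sd_self]
      ring
    rw [he, hdiag x] at h
    linarith
  -- the tight-sum bound
  have hTb : ∀ x y : X,
      (∑' a : ↥𝒯, ((if x ∈ (↑a : Set X) then ν a else lam ↑a - ν a)
          + (if y ∈ (↑a : Set X) then ν a else lam ↑a - ν a)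
          - lam ↑a * splitDist (↑a : Set X) x y)) ≤ f x + f y - d x y := by
    intro x y
    apply Summable.tsum_le_of_sum_le (((hsumG x).add (hsumG y)).sub (hd₁ x y).summable)
    intro u
    have := hZall u x y
    have he : ∑ a ∈ u, ctermD (↑a : Set X) (lam ↑a) (ν a) x y
        = ∑ a ∈ u, ((if x ∈ (↑a : Set X) then ν a else lam ↑a - ν a)
          + (if y ∈ (↑a : Set X) then ν a else lam ↑a - ν a)
          - lam ↑a * splitDist (↑a : Set X) x y) := rfl
    rw [← he]
    exact this
  have hTsplit : ∀ x y : X,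
      (∑' a : ↥𝒯, ((if x ∈ (↑a : Set X) then ν a else lam ↑a - ν a)
          + (if y ∈ (↑a : Set X) then ν a else lam ↑a - ν a)
          - lam ↑a * splitDist (↑a : Set X) x y))
        = (∑' a : ↥𝒯, (if x ∈ (↑a : Set X) then ν a else lam ↑a - ν a))
          + (∑' a : ↥𝒯, (if y ∈ (↑a : Set X) then ν a else lam ↑a - ν a))
          - (d x y - d₁ x y) := by
    intro x y
    rw [Summable.tsum_sub ((hsumG x).add (hsumG y)) (hd₁ x y).summable,
      Summable.tsum_add (hsumG x) (hsumG y), (hd₁ x y).tsum_eq]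
  refine ⟨fun x => f x - ∑' a : ↥𝒯, (if x ∈ (↑a : Set X) then ν a else lam ↑a - ν a),
    ?_, Fsplit 𝒯 lam ν, ?_, ?_⟩
  · -- f₁ ∈ ExtSet d₁
    intro x
    constructor
    · rintro r ⟨y, rfl⟩
      show d₁ x y - (f y - ∑' a : ↥𝒯, (if y ∈ (↑a : Set X) then ν a else lam ↑a - ν a))
        ≤ f x - ∑' a : ↥𝒯, (if x ∈ (↑a : Set X) then ν a else lam ↑a - ν a)
      have h1' := hTb x y
      have h2' := hTsplit x y
      linarith
    · intro c hc
      have hub : ∀ y, d x y - f y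
          ≤ c + ∑' a : ↥𝒯, (if x ∈ (↑a : Set X) then ν a else lam ↑a - ν a) := by
        intro y
        have h : d₁ x y
            - (f y - ∑' a : ↥𝒯, (if y ∈ (↑a : Set X) then ν a else lam ↑a - ν a)) ≤ c :=
          hc ⟨y, rfl⟩
        have hpt : ∀ a : ↥𝒯, lam ↑a * splitDist (↑a : Set X) x y
            - (if y ∈ (↑a : Set X) then ν a else lam ↑a - ν a)
            ≤ (if x ∈ (↑a : Set X) then ν a else lam ↑a - ν a) := by
          intro a
          by_cases hx : x ∈ (↑a : Set X) <;> by_cases hy : y ∈ (↑a : Set X)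
          · rw [sd_eq_zero (by tauto), if_pos hx, if_pos hy]; linarith [(hbox a).1]
          · rw [sd_eq_one (by tauto), if_pos hx, if_neg hy]; linarith
          · rw [sd_eq_one (by tauto), if_neg hx, if_pos hy]; linarith
          · rw [sd_eq_zero (by tauto), if_neg hx, if_neg hy]
            linarith [(hbox a).1, (hbox a).2]
        have hts : (∑' a : ↥𝒯, (lam ↑a * splitDist (↑a : Set X) x y
            - (if y ∈ (↑a : Set X) then ν a else lam ↑a - ν a)))
            ≤ ∑' a : ↥𝒯, (if x ∈ (↑a : Set X) then ν a else lam ↑a - ν a) :=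
          Summable.tsum_le_tsum hpt ((hd₁ x y).summable.sub (hsumG y)) (hsumG x)
        have hts2 : (∑' a : ↥𝒯, (lam ↑a * splitDist (↑a : Set X) x y
            - (if y ∈ (↑a : Set X) then ν a else lam ↑a - ν a)))
            = (d x y - d₁ x y)
              - ∑' a : ↥𝒯, (if y ∈ (↑a : Set X) then ν a else lam ↑a - ν a) := by
          rw [Summable.tsum_sub (hd₁ x y).summable (hsumG y), (hd₁ x y).tsum_eq]
        linarith
      have hfx : f x ≤ c + ∑' a : ↥𝒯, (if x ∈ (↑a : Set X) then ν a else lam ↑a - ν a) :=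
        (hf x).2 (by rintro r ⟨y, rfl⟩; exact hub y)
      show f x - ∑' a : ↥𝒯, (if x ∈ (↑a : Set X) then ν a else lam ↑a - ν a) ≤ c
      linarith
  · -- each F A is extremal for splitDist A
    intro A hA
    have hs0 : (0:ℝ) ≤ (if lam A = 0 then 0 else ν ⟨A, hA⟩ / lam A) := by
      by_cases hl : lam A = 0
      · rw [if_pos hl]
      · rw [if_neg hl]
        have hl' : 0 < lam A := lt_of_le_of_ne (h2 ⟨A, hA⟩) (Ne.symm hl)
        exact div_nonneg (hbox ⟨A, hA⟩).1 (le_of_lt hl')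
    have hs1 : (if lam A = 0 then 0 else ν ⟨A, hA⟩ / lam A) ≤ 1 := by
      by_cases hl : lam A = 0
      · rw [if_pos hl]; norm_num
      · rw [if_neg hl]
        have hl' : 0 < lam A := lt_of_le_of_ne (h2 ⟨A, hA⟩) (Ne.symm hl)
        rw [div_le_one hl']
        exact (hbox ⟨A, hA⟩).2
    have he : Fsplit 𝒯 lam ν A = (fun x =>
        if x ∈ A then (if lam A = 0 then 0 else ν ⟨A, hA⟩ / lam A)
        else 1 - (if lam A = 0 then 0 else ν ⟨A, hA⟩ / lam A)) := by
      funext x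
      unfold Fsplit
      rw [dif_pos hA]
    rw [he]
    exact sd_extremal (h1 ⟨A, hA⟩).1 (h1 ⟨A, hA⟩).2 hs0 hs1
  · -- the sums converge to f - f₁
    intro x
    have he : (fun a : ↥𝒯 => lam ↑a * Fsplit 𝒯 lam ν ↑a x)
        = (fun a : ↥𝒯 => (if x ∈ (↑a : Set X) then ν a else lam ↑a - ν a)) := by
      funext a
      exact Fsplit_mul hbox a x
    rw [he]
    have : f x - (f x - ∑' a : ↥𝒯, (if x ∈ (↑a : Set X) then ν a else lam ↑a - ν a))
        = ∑' a : ↥𝒯, (if x ∈ (↑a : Set X) then ν a else lam ↑a - ν a) := by ring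
    rw [this]
    exact (hsumG x).hasSum

lemma exists_ext_le {d : X → X → ℝ} (hsym : ∀ x y, d x y = d y x) (hdiag : ∀ x, d x x = 0)
    {g : X → ℝ} (hg : ∀ x y, d x y ≤ g x + g y) : ∃ f ∈ ExtSet d, ∀ x, f x ≤ g x := by
  classical
  set S : Set (X → ℝ) := {h | (∀ x y, d x y ≤ -h x + -h y) ∧ ∀ x, 0 ≤ g x + h x} with hS
  have hub : ∀ c ⊆ S, IsChain (· ≤ ·) c → ∃ ub ∈ S, ∀ z ∈ c, z ≤ ub := by
    intro c hcS hchain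
    by_cases hne : c.Nonempty
    · obtain ⟨h0, hh0⟩ := hne
      have hBdd : ∀ x : X, BddAbove {r | ∃ h ∈ c, r = h x} := by
        intro x
        refine ⟨0, ?_⟩
        rintro r ⟨h, hh, rfl⟩
        have := (hcS hh).1 x x
        rw [hdiag] at this
        linarith
      have hNe : ∀ x : X, {r | ∃ h ∈ c, r = h x}.Nonempty := fun x => ⟨h0 x, h0, hh0, rfl⟩
      refine ⟨fun x => sSup {r | ∃ h ∈ c, r = h x}, ⟨?_, ?_⟩, ?_⟩
      · intro x y
        have h1 : sSup {r | ∃ h ∈ c, r = h y} ≤ -d x y - sSup {r | ∃ h ∈ c, r = h x} := by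
          apply csSup_le (hNe y)
          rintro r ⟨h, hh, rfl⟩
          have h2 : sSup {r | ∃ h' ∈ c, r = h' x} ≤ -d x y - h y := by
            apply csSup_le (hNe x)
            rintro r' ⟨h', hh', rfl⟩
            rcases hchain.total hh' hh with hle | hle
            · have := (hcS hh).1 x y
              have := hle x
              linarith
            · have := (hcS hh').1 x y
              have := hle y
              linarith
          linarith
        linarith
      · intro x
        have h1 : h0 x ≤ sSup {r | ∃ h ∈ c, r = h x} := le_csSup (hBdd x) ⟨h0, hh0, rfl⟩
        have h2 := (hcS hh0).2 x
        linarith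
      · intro z hz x
        exact le_csSup (hBdd x) ⟨z, hz, rfl⟩
    · refine ⟨fun x => -g x, ⟨fun x y => by simpa using hg x y, fun x => by simp⟩, ?_⟩
      intro z hz
      exact absurd ⟨z, hz⟩ hne
  obtain ⟨m, hm⟩ := zorn_le₀ S hub
  have hmS : m ∈ S := hm.1
  refine ⟨fun x => -m x, ?_, fun x => by have := hmS.2 x; show -m x ≤ g x; linarith⟩
  intro x
  constructor
  · rintro r ⟨y, rfl⟩
    show d x y - -m y ≤ -m x
    have := hmS.1 x y
    linarith
  · intro cub hcub
    show -m x ≤ cub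
    by_contra hlt
    push_neg at hlt
    have hcx : ∀ y, d x y - -m y ≤ cub := fun y => hcub ⟨y, rfl⟩
    have hm0 : 0 ≤ -m x := by
      have := hmS.1 x x
      rw [hdiag] at this
      linarith
    set η : ℝ := max cub 0 with hη
    have hη0 : 0 ≤ η := le_max_right _ _
    have hηlt : η < -m x := by
      rcases le_or_gt (-m x) 0 with h | h
      · have h1 := hcx x
        rw [hdiag] at h1
        have : m x = 0 := by linarith
        rw [this] at hlt
        linarith
      · exact max_lt hlt h
    set m' : X → ℝ := fun z => if z = x then -η else m z with hm'
    have hm'S : m' ∈ S := by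
      constructor
      · intro u v
        show d u v ≤ -(if u = x then -η else m u) + -(if v = x then -η else m v)
        by_cases hu : u = x <;> by_cases hv : v = x
        · rw [if_pos hu, if_pos hv]
          have he : d u v = 0 := by rw [hu, hv, hdiag]
          linarith
        · rw [if_pos hu, if_neg hv]
          have h1 := hcx v
          have h2 : cub ≤ η := le_max_left _ _
          have he : d u v = d x v := by rw [hu]
          linarith
        · rw [if_neg hu, if_pos hv]
          have h1 := hcx u
          have h2 : cub ≤ η := le_max_left _ _
          have he : d u v = d x u := by rw [hv, hsym u x]
          linarith
        · rw [if_neg hu, if_neg hv]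
          exact hmS.1 u v
      · intro z
        show 0 ≤ g z + (if z = x then -η else m z)
        by_cases hz : z = x
        · rw [if_pos hz]
          have h1 := hmS.2 x
          have he : g z = g x := by rw [hz]
          linarith
        · rw [if_neg hz]
          exact hmS.2 z
    have hle : m ≤ m' := by
      intro z
      show m z ≤ (if z = x then -η else m z)
      by_cases hz : z = x
      · rw [if_pos hz]
        have he : m z = m x := by rw [hz]
        linarith
      · rw [if_neg hz]
    have h9 : (if x = x then -η else m x) ≤ m x := hm.2 hm'S hle x
    rw [if_pos rfl] at h9
    linarith

lemma feas {dab daa' dab' da'b da'b' dbb' : ℝ}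
    (n1 : 0 ≤ dab) (n2 : 0 ≤ daa') (n3 : 0 ≤ dab') (n4 : 0 ≤ da'b) (n5 : 0 ≤ da'b')
    (n6 : 0 ≤ dbb')
    (tri1 : dbb' ≤ dab + dab') (tri2 : dbb' ≤ da'b + da'b')
    (tri3 : daa' ≤ dab + da'b) (tri4 : daa' ≤ dab' + da'b')
    (h1 : da'b + dab' ≤ dab + da'b') (h2 : daa' + dbb' ≤ dab + da'b') :
    ∃ fa fa' fb fb' : ℝ, 0 ≤ fa ∧ 0 ≤ fa' ∧ 0 ≤ fb ∧ 0 ≤ fb' ∧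
      daa' ≤ fa + fa' ∧ dab ≤ fa + fb ∧ dab' ≤ fa + fb' ∧ da'b ≤ fa' + fb ∧
      da'b' ≤ fa' + fb' ∧ dbb' ≤ fb + fb' ∧ fa + fa' + fb + fb' = dab + da'b' := by
  set u : ℝ := max (max 0 (da'b - dab)) (max (daa' - dab) ((daa' - dab + da'b) / 2)) with hu
  have hu_ge1 : (0:ℝ) ≤ u := le_trans (le_max_left _ _) (le_max_left _ _)
  have hu_ge2 : da'b - dab ≤ u := le_trans (le_max_right _ _) (le_max_left _ _)
  have hu_ge3 : daa' - dab ≤ u := le_trans (le_max_left _ _) (le_max_right _ _)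
  have hu_ge4 : (daa' - dab + da'b) / 2 ≤ u := le_trans (le_max_right _ _) (le_max_right _ _)
  have hu1 : u ≤ da'b' :=
    max_le (max_le (by linarith) (by linarith)) (max_le (by linarith) (by linarith))
  have hu2 : u ≤ dab + da'b' - dbb' :=
    max_le (max_le (by linarith) (by linarith)) (max_le (by linarith) (by linarith))
  have hu3 : u ≤ dab - dab' + da'b' :=
    max_le (max_le (by linarith) (by linarith)) (max_le (by linarith) (by linarith))
  have hu4 : u ≤ (dab + 2 * da'b' - dbb' - dab') / 2 :=
    max_le (max_le (by linarith) (by linarith)) (max_le (by linarith) (by linarith))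
  set t : ℝ := max (max 0 (daa' - u)) (dab' - da'b' + u) with ht
  have ht_ge1 : (0:ℝ) ≤ t := le_trans (le_max_left _ _) (le_max_left _ _)
  have ht_ge2 : daa' - u ≤ t := le_trans (le_max_right _ _) (le_max_left _ _)
  have ht_ge3 : dab' - da'b' + u ≤ t := le_max_right _ _
  have ht1 : t ≤ dab := max_le (max_le n1 (by linarith)) (by linarith)
  have ht2 : t ≤ dab + da'b' - dbb' - u :=
    max_le (max_le (by linarith) (by linarith)) (by linarith)
  have ht3 : t ≤ dab - da'b + u := max_le (max_le (by linarith) (by linarith)) (by linarith)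
  refine ⟨t, u, dab - t, da'b' - u, ht_ge1, hu_ge1, by linarith, by linarith,
    by linarith, by linarith, by linarith, by linarith, by linarith, by linarith, by ring⟩

lemma part2_main {d : X → X → ℝ} (hsym : ∀ x y, d x y = d y x) (hdiag : ∀ x, d x x = 0)
    (htri : ∀ x y z, d x z ≤ d x y + d y z)
    {A : Set X} {lam' : ℝ} {d₁' : X → X → ℝ} (hlpos : 0 ≤ lam')
    (heq : ∀ x y, d x y = d₁' x y + lam' * splitDist A x y)
    (hdec : ∀ f ∈ ExtSet d, ∃ g₁ ∈ ExtSet d₁', ∃ gS ∈ ExtSet (splitDist A),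
      ∀ x, f x = g₁ x + lam' * gS x)
    {a a' b b' : X} (ha : a ∈ A) (ha' : a' ∈ A) (hb : b ∈ Aᶜ) (hb' : b' ∈ Aᶜ) :
    lam' ≤ betaIdx d a a' b b' := by
  have hd0 : ∀ x y, 0 ≤ d x y := by
    intro x y
    have h1 := htri x y x
    have h2 := hsym y x
    have h3 := hdiag x
    linarith
  set M3 : ℝ := max (max (d a b + d a' b') (d a' b + d a b')) (d a a' + d b b') with hM3
  obtain ⟨Fa, Fa', Fb, Fb', hFa, hFa', hFb, hFb', c1, c2, c3, c4, c5, c6, csum⟩ :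
      ∃ Fa Fa' Fb Fb' : ℝ, 0 ≤ Fa ∧ 0 ≤ Fa' ∧ 0 ≤ Fb ∧ 0 ≤ Fb' ∧
        d a a' ≤ Fa + Fa' ∧ d a b ≤ Fa + Fb ∧ d a b' ≤ Fa + Fb' ∧ d a' b ≤ Fa' + Fb ∧
        d a' b' ≤ Fa' + Fb' ∧ d b b' ≤ Fb + Fb' ∧ Fa + Fa' + Fb + Fb' = M3 := by
    rcases le_total (d a' b + d a b') (d a b + d a' b') with h12 | h12
    · rcases le_total (d a a' + d b b') (d a b + d a' b') with h13 | h13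
      · -- p1 maximal
        have hM3v : M3 = d a b + d a' b' := by
          rw [hM3, max_eq_left h12, max_eq_left h13]
        obtain ⟨fa, fa', fb, fb', g1, g2, g3, g4, g5, g6, g7, g8, g9, g10, gsum⟩ :=
          feas (hd0 a b) (hd0 a a') (hd0 a b') (hd0 a' b) (hd0 a' b') (hd0 b b')
            (by linarith [htri b a b', hsym b a]) (by linarith [htri b a' b', hsym b a'])
            (by linarith [htri a b a', hsym b a']) (by linarith [htri a b' a', hsym b' a'])
            h12 h13
        exact ⟨fa, fa', fb, fb', g1, g2, g3, g4, g5, g6, g7, g8, g9, g10, by linarith⟩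
      · -- p3 maximal (p2 ≤ p1 ≤ p3)
        have hM3v : M3 = d a a' + d b b' := by
          rw [hM3, max_eq_left h12, max_eq_right h13]
        obtain ⟨fa, fb2, fa2, fb2', g1, g2, g3, g4, g5, g6, g7, g8, g9, g10, gsum⟩ :=
          feas (hd0 a a') (hd0 a b) (hd0 a b') (hd0 b a') (hd0 b b') (hd0 a' b')
            (by linarith [htri a' a b', hsym a' a]) (by linarith [htri a' b b', hsym a' b])
            (by linarith [htri a a' b, hsym a' b]) (by linarith [htri a b' b, hsym b' b])
            (by linarith [hsym b a']) (by linarith)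
        refine ⟨fa, fa2, fb2, fb2', g1, g3, g2, g4, by linarith, by linarith, by linarith,
          by linarith [hsym b a'], by linarith, by linarith, by linarith⟩
    · rcases le_total (d a a' + d b b') (d a' b + d a b') with h23 | h23
      · -- p2 maximal
        have hM3v : M3 = d a' b + d a b' := by
          rw [hM3, max_eq_right h12, max_eq_left h23]
        obtain ⟨fa, fa', fb2, fb2', g1, g2, g3, g4, g5, g6, g7, g8, g9, g10, gsum⟩ :=
          feas (hd0 a b') (hd0 a a') (hd0 a b) (hd0 a' b') (hd0 a' b) (hd0 b' b)
            (by linarith [htri b' a b, hsym b' a]) (by linarith [htri b' a' b, hsym b' a'])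
            (by linarith [htri a b' a', hsym b' a']) (by linarith [htri a b a', hsym b a'])
            (by linarith) (by linarith [hsym b' b])
        refine ⟨fa, fa', fb2', fb2, g1, g2, g4, g3, by linarith, by linarith, by linarith,
          by linarith, by linarith, by linarith [hsym b' b], by linarith⟩
      · -- p3 maximal (p1 ≤ p2 ≤ p3)
        have hM3v : M3 = d a a' + d b b' := by
          rw [hM3, max_eq_right h12, max_eq_right h23]
        obtain ⟨fa, fb2, fa2, fb2', g1, g2, g3, g4, g5, g6, g7, g8, g9, g10, gsum⟩ :=
          feas (hd0 a a') (hd0 a b) (hd0 a b') (hd0 b a') (hd0 b b') (hd0 a' b')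
            (by linarith [htri a' a b', hsym a' a]) (by linarith [htri a' b b', hsym a' b])
            (by linarith [htri a a' b, hsym a' b]) (by linarith [htri a b' b, hsym b' b])
            (by linarith [hsym b a']) (by linarith)
        refine ⟨fa, fa2, fb2, fb2', g1, g3, g2, g4, by linarith, by linarith, by linarith,
          by linarith [hsym b a'], by linarith, by linarith, by linarith⟩
  -- the McShane-type extension of the four-point function
  set gext : X → ℝ := fun x =>
    min (min (d x a + Fa) (d x a' + Fa')) (min (d x b + Fb) (d x b' + Fb')) with hgext
  have key : ∀ (u v : X) (Fu Fv : ℝ), d u v ≤ Fu + Fv → ∀ x y : X,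
      gext x = d x u + Fu → gext y = d y v + Fv → d x y ≤ gext x + gext y := by
    intro u v Fu Fv huv x y hx hy
    rw [hx, hy]
    have t1 := htri x u y
    have t2 := htri u v y
    have t3 := hsym v y
    linarith
  have hgΔ : ∀ x y, d x y ≤ gext x + gext y := by
    intro x y
    have hxe : gext x = d x a + Fa ∨ gext x = d x a' + Fa' ∨ gext x = d x b + Fb ∨
        gext x = d x b' + Fb' := by
      rcases min_cases (min (d x a + Fa) (d x a' + Fa')) (min (d x b + Fb) (d x b' + Fb'))
        with ⟨h1, _⟩ | ⟨h1, _⟩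
      · rcases min_cases (d x a + Fa) (d x a' + Fa') with ⟨h2, _⟩ | ⟨h2, _⟩
        · exact Or.inl (h1.trans h2)
        · exact Or.inr (Or.inl (h1.trans h2))
      · rcases min_cases (d x b + Fb) (d x b' + Fb') with ⟨h2, _⟩ | ⟨h2, _⟩
        · exact Or.inr (Or.inr (Or.inl (h1.trans h2)))
        · exact Or.inr (Or.inr (Or.inr (h1.trans h2)))
    have hye : gext y = d y a + Fa ∨ gext y = d y a' + Fa' ∨ gext y = d y b + Fb ∨
        gext y = d y b' + Fb' := by
      rcases min_cases (min (d y a + Fa) (d y a' + Fa')) (min (d y b + Fb) (d y b' + Fb'))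
        with ⟨h1, _⟩ | ⟨h1, _⟩
      · rcases min_cases (d y a + Fa) (d y a' + Fa') with ⟨h2, _⟩ | ⟨h2, _⟩
        · exact Or.inl (h1.trans h2)
        · exact Or.inr (Or.inl (h1.trans h2))
      · rcases min_cases (d y b + Fb) (d y b' + Fb') with ⟨h2, _⟩ | ⟨h2, _⟩
        · exact Or.inr (Or.inr (Or.inl (h1.trans h2)))
        · exact Or.inr (Or.inr (Or.inr (h1.trans h2)))
    rcases hxe with hx | hx | hx | hx <;> rcases hye with hy | hy | hy | hy
    · exact key a a _ _ (by linarith [hdiag a]) x y hx hy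
    · exact key a a' _ _ (by linarith) x y hx hy
    · exact key a b _ _ (by linarith) x y hx hy
    · exact key a b' _ _ (by linarith) x y hx hy
    · exact key a' a _ _ (by linarith [hsym a' a]) x y hx hy
    · exact key a' a' _ _ (by linarith [hdiag a']) x y hx hy
    · exact key a' b _ _ (by linarith) x y hx hy
    · exact key a' b' _ _ (by linarith) x y hx hy
    · exact key b a _ _ (by linarith [hsym b a]) x y hx hy
    · exact key b a' _ _ (by linarith [hsym b a']) x y hx hy
    · exact key b b _ _ (by linarith [hdiag b]) x y hx hy
    · exact key b b' _ _ (by linarith) x y hx hy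
    · exact key b' a _ _ (by linarith [hsym b' a]) x y hx hy
    · exact key b' a' _ _ (by linarith [hsym b' a']) x y hx hy
    · exact key b' b _ _ (by linarith [hsym b' b]) x y hx hy
    · exact key b' b' _ _ (by linarith [hdiag b']) x y hx hy
  obtain ⟨fs, hfs, hle⟩ := exists_ext_le hsym hdiag hgΔ
  have hfsΔ := ext_delta hfs
  -- the four values of fs sum to exactly M3
  have hub : fs a + fs a' + fs b + fs b' ≤ M3 := by
    have hga : gext a ≤ Fa := by
      have h : gext a ≤ d a a + Fa := le_trans (min_le_left _ _) (min_le_left _ _)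
      rw [hdiag a] at h
      linarith
    have hga' : gext a' ≤ Fa' := by
      have h : gext a' ≤ d a' a' + Fa' := le_trans (min_le_left _ _) (min_le_right _ _)
      rw [hdiag a'] at h
      linarith
    have hgb : gext b ≤ Fb := by
      have h : gext b ≤ d b b + Fb := le_trans (min_le_right _ _) (min_le_left _ _)
      rw [hdiag b] at h
      linarith
    have hgb' : gext b' ≤ Fb' := by
      have h : gext b' ≤ d b' b' + Fb' := le_trans (min_le_right _ _) (min_le_right _ _)
      rw [hdiag b'] at h
      linarith
    have l1 := hle a; have l2 := hle a'; have l3 := hle b; have l4 := hle b'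
    linarith
  have hlb : M3 ≤ fs a + fs a' + fs b + fs b' := by
    have e1 := hfsΔ a b
    have e2 := hfsΔ a' b'
    have e3 := hfsΔ a' b
    have e4 := hfsΔ a b'
    have e5 := hfsΔ a a'
    have e6 := hfsΔ b b'
    exact max_le (max_le (by linarith) (by linarith)) (by linarith)
  obtain ⟨g₁, hg₁, gS, hgS, hsumdec⟩ := hdec fs hfs
  have e1 : d₁' a a' ≤ g₁ a + g₁ a' := ext_delta hg₁ a a'
  have e2 : d₁' b b' ≤ g₁ b + g₁ b' := ext_delta hg₁ b b'
  have e3 : splitDist A a b ≤ gS a + gS b := ext_delta hgS a b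
  have e4 : splitDist A a' b' ≤ gS a' + gS b' := ext_delta hgS a' b'
  rw [sd_eq_one (by tauto)] at e3
  rw [sd_eq_one (by tauto)] at e4
  have q1 : d₁' a a' = d a a' := by
    have h := heq a a'
    rw [sd_eq_zero (by tauto)] at h
    linarith
  have q2 : d₁' b b' = d b b' := by
    have h := heq b b'
    rw [sd_eq_zero (by tauto)] at h
    linarith
  have hda := hsumdec a
  have hda' := hsumdec a'
  have hdb := hsumdec b
  have hdb' := hsumdec b'
  have m3 : lam' ≤ lam' * gS a + lam' * gS b := by
    have h := mul_le_mul_of_nonneg_left e3 hlpos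
    rw [mul_one, mul_add] at h
    exact h
  have m4 : lam' ≤ lam' * gS a' + lam' * gS b' := by
    have h := mul_le_mul_of_nonneg_left e4 hlpos
    rw [mul_one, mul_add] at h
    exact h
  have hfin : d a a' + d b b' + 2 * lam' ≤ M3 := by linarith
  unfold betaIdx
  have hM3e : M3 = max (max (d a b + d a' b') (d a' b + d a b')) (d a a' + d b b') := hM3
  linarith

lemma betaIdx_nonneg (ρ : X → X → ℝ) (a a' b b' : X) : 0 ≤ betaIdx ρ a a' b b' := by
  unfold betaIdx
  have h := le_max_right (max (ρ a b + ρ a' b') (ρ a' b + ρ a b')) (ρ a a' + ρ b b')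
  linarith

theorem statement11 (d : X → X → ℝ) (hmet : IsMetric d) (hint : IsIntegerValued d)
    (hlrc : LRC d)
    (𝒯 : Set (Set X))
    (h𝒯₁ : ∀ A ∈ 𝒯, IsDSplit d A Aᶜ)
    (h𝒯₂ : ∀ A : Set X, IsDSplit d A Aᶜ → (A ∈ 𝒯 ↔ Aᶜ ∉ 𝒯))
    (lam : Set X → ℝ)
    (hlam : ∀ A ∈ 𝒯, 0 ≤ lam A ∧ lam A ≤ isolIdx d A Aᶜ)
    (d₁ : X → X → ℝ)
    (hd₁ : ∀ x y : X,
      HasSum (fun A : ↥𝒯 => lam ↑A * splitDist (↑A) x y) (d x y - d₁ x y)) :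
    (∀ f ∈ ExtSet d, ∃ f₁ ∈ ExtSet d₁, ∃ F : Set X → X → ℝ,
      (∀ A ∈ 𝒯, F A ∈ ExtSet (splitDist A)) ∧
      ∀ x, HasSum (fun A : ↥𝒯 => lam ↑A * F (↑A) x) (f x - f₁ x)) ∧
    (∀ (A B : Set X) (lam' : ℝ) (d₁' : X → X → ℝ), IsSplit A B → 0 < lam' →
      IsPseudometric d₁' → (∀ x y, d x y = d₁' x y + lam' * splitDist A x y) →
      (∀ f ∈ ExtSet d, ∃ g₁ ∈ ExtSet d₁', ∃ gS ∈ ExtSet (splitDist A),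
        ∀ x, f x = g₁ x + lam' * gS x) →
      IsDSplit d A B ∧ lam' ≤ isolIdx d A B) := by
  obtain ⟨⟨hdiag, hsymm, htri⟩, _⟩ := hmet
  constructor
  · -- Part (1)
    refine part1_main hsymm hdiag ?_ ?_ ?_ ?_ hd₁
    · intro a
      have h := (h𝒯₁ ↑a a.2).1.1
      exact ⟨h.1, h.2.1⟩
    · intro a
      exact (hlam ↑a a.2).1
    · intro b p hp p' hp' q hq q' hq'
      rw [aquad_iff_beta]
      have h1 : lam ↑b ≤ isolIdx d ↑b (↑b : Set X)ᶜ := (hlam ↑b b.2).2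
      have h2 : isolIdx d ↑b (↑b : Set X)ᶜ ≤ betaIdx d p p' q q' := by
        apply csInf_le
        · refine ⟨0, ?_⟩
          rintro r ⟨x, _, x', _, y, _, y', _, rfl⟩
          exact betaIdx_nonneg d x x' y y'
        · exact ⟨p, hp, p', hp', q, hq, q', hq', rfl⟩
      linarith
    · intro a b hab
      constructor
      · intro h
        exact hab (Subtype.ext h)
      · intro h
        have h1 : (↑a : Set X)ᶜ ∉ 𝒯 := (h𝒯₂ ↑a (h𝒯₁ ↑a a.2)).mp a.2
        exact h1 (h ▸ b.2)
  · -- Part (2)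
    intro A B lam' d₁' hsplit hpos _ heq hdec
    have hBc : B = Aᶜ := by
      obtain ⟨⟨hAne, hBne, hdisj⟩, huniv⟩ := hsplit
      ext z
      constructor
      · intro hz hzA
        exact (Set.disjoint_left.mp hdisj hzA) hz
      · intro hz
        have hzu : z ∈ A ∪ B := huniv ▸ Set.mem_univ z
        rcases hzu with h | h
        · exact absurd h hz
        · exact h
    have hmain : ∀ r ∈ {r : ℝ | ∃ a ∈ A, ∃ a' ∈ A, ∃ b ∈ B, ∃ b' ∈ B,
        r = betaIdx d a a' b b'}, lam' ≤ r := by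
      rintro r ⟨a, haA, a', ha'A, b, hbB, b', hb'B, rfl⟩
      have hb1 : b ∈ Aᶜ := hBc ▸ hbB
      have hb2 : b' ∈ Aᶜ := hBc ▸ hb'B
      exact part2_main hsymm hdiag htri (le_of_lt hpos) heq hdec haA ha'A hb1 hb2
    obtain ⟨a0, ha0⟩ := hsplit.1.1
    obtain ⟨b0, hb0⟩ := hsplit.1.2.1
    have hisol : lam' ≤ isolIdx d A B :=
      le_csInf ⟨_, a0, ha0, a0, ha0, b0, hb0, b0, hb0, rfl⟩ hmain
    exact ⟨⟨hsplit, lt_of_lt_of_le hpos hisol⟩, hisol⟩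
end
end

section
/- Let (S,α) be a split system pair on a set X such that d := ∑_{S ∈ S} α_S δ_S defines a pseudometric on X (the sums being finite). Then for every μ ∈ H(S,α), the function κ(μ) belongs to E'(X,d) if and only if μ belongs to T̄(S,α). -/
open Set Function

noncomputable section

variable {X : Type*}

open scoped ENNReal

/-- The support of `μ : U(S) → [0,∞)`, within the set `𝒮` of parts of splits. -/
def suppOf (𝒮 : Set (Set X)) (μ : Set X → ℝ) : Set (Set X) := {A ∈ 𝒮 | 0 < μ A}

/-- Membership in the hypercube `H(S, α)`. -/
def memH (𝒮 : Set (Set X)) (α : Set X → ℝ) (μ : Set X → ℝ) : Prop :=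
  (∀ A ∈ 𝒮, 0 ≤ μ A) ∧ ∀ A ∈ 𝒮, μ A + μ Aᶜ = α A / 2

/-- Membership in `T̄(S, α)`. -/
def memT (𝒮 : Set (Set X)) (α : Set X → ℝ) (μ : Set X → ℝ) : Prop :=
  memH 𝒮 α μ ∧ ∀ I : Set (Set X), I ⊆ suppOf 𝒮 μ → ⋃₀ I = univ → ⋂₀ I = ∅

/-- Membership in the Buneman complex `B(S, α)`. -/
def memB (𝒮 : Set (Set X)) (α : Set X → ℝ) (μ : Set X → ℝ) : Prop :=
  memH 𝒮 α μ ∧ ∀ A ∈ suppOf 𝒮 μ, ∀ B ∈ suppOf 𝒮 μ, A ∪ B = univ → A ∩ B = ∅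

open Classical in
/-- The canonical point `φ_x ∈ H(S, α)`. -/
def phiPoint (α : Set X → ℝ) (x : X) : Set X → ℝ :=
  fun A => if x ∈ A then 0 else α A / 2

/-- The `ℓ¹`-distance `d₁(μ, ψ) = ∑_{A ∈ U(S)} |μ A - ψ A|`, valued in `[0,∞]`. -/
def dOne (𝒮 : Set (Set X)) (μ ψ : Set X → ℝ) : ℝ≥0∞ :=
  ∑' A : 𝒮, ENNReal.ofReal |μ ↑A - ψ ↑A|

/-- Membership in the cell `[φ]` of `H(S, α)`. -/
def memCell (𝒮 : Set (Set X)) (α : Set X → ℝ) (φ μ : Set X → ℝ) : Prop :=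
  memH 𝒮 α μ ∧ suppOf 𝒮 μ ⊆ suppOf 𝒮 φ

open Classical in
/-- The gate `γ^x_{[φ]}` of `φ_x` in the cell `[φ]`. -/
def gateAt (𝒮 : Set (Set X)) (α : Set X → ℝ) (φ : Set X → ℝ) (x : X) : Set X → ℝ :=
  fun A => if A ∈ 𝒮 ∧ 0 < φ A ∧ 0 < φ Aᶜ then phiPoint α x A else φ A

open Classical in
private lemma sepSum (𝒮 : Set (Set X)) (hcompl : ∀ A ∈ 𝒮, Aᶜ ∈ 𝒮)
    (α : Set X → ℝ) (hα : ∀ A ∈ 𝒮, 0 < α A) (hαs : ∀ A ∈ 𝒮, α A = α Aᶜ)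
    (hfin : ∀ x y : X, {A | A ∈ 𝒮 ∧ x ∈ A ∧ y ∉ A}.Finite)
    (d : X → X → ℝ)
    (hd : ∀ x y : X, d x y = ∑ᶠ A ∈ {A | A ∈ 𝒮 ∧ x ∈ A ∧ y ∉ A}, α A)
    (x y : X) :
    ∑' A : Set X, (if A ∈ 𝒮 ∧ ¬(x ∈ A ↔ y ∈ A) then ENNReal.ofReal (α A / 2) else 0)
      = ENNReal.ofReal (d x y) := by
  have hP := hfin x y
  have hQ := hfin y x
  have hdisj : Disjoint hP.toFinset hQ.toFinset := by
    rw [Finset.disjoint_left]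
    intro A hA hA'
    rw [Set.Finite.mem_toFinset] at hA hA'
    exact hA.2.2 hA'.2.1
  rw [tsum_eq_sum (s := hP.toFinset ∪ hQ.toFinset) ?_]
  · rw [Finset.sum_union hdisj]
    have e1 : ∀ A ∈ hP.toFinset,
        (if A ∈ 𝒮 ∧ ¬(x ∈ A ↔ y ∈ A) then ENNReal.ofReal (α A / 2) else 0)
          = ENNReal.ofReal (α A / 2) := by
      intro A hA
      rw [Set.Finite.mem_toFinset] at hA
      rw [if_pos ⟨hA.1, fun h => hA.2.2 (h.mp hA.2.1)⟩]
    have e2 : ∀ A ∈ hQ.toFinset,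
        (if A ∈ 𝒮 ∧ ¬(x ∈ A ↔ y ∈ A) then ENNReal.ofReal (α A / 2) else 0)
          = ENNReal.ofReal (α A / 2) := by
      intro A hA
      rw [Set.Finite.mem_toFinset] at hA
      rw [if_pos ⟨hA.1, fun h => hA.2.2 (h.mpr hA.2.1)⟩]
    rw [Finset.sum_congr rfl e1, Finset.sum_congr rfl e2]
    have e3 : ∑ A ∈ hQ.toFinset, ENNReal.ofReal (α A / 2)
        = ∑ A ∈ hP.toFinset, ENNReal.ofReal (α A / 2) := by
      refine Finset.sum_nbij' (fun A => Aᶜ) (fun A => Aᶜ) ?_ ?_ ?_ ?_ ?_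
      · intro A hA
        rw [Set.Finite.mem_toFinset] at hA ⊢
        exact ⟨hcompl A hA.1, hA.2.2, fun h => h hA.2.1⟩
      · intro A hA
        rw [Set.Finite.mem_toFinset] at hA ⊢
        exact ⟨hcompl A hA.1, hA.2.2, fun h => h hA.2.1⟩
      · intro A _; exact compl_compl A
      · intro A _; exact compl_compl A
      · intro A hA
        rw [Set.Finite.mem_toFinset] at hA
        rw [← hαs A hA.1]
    rw [e3, ← Finset.sum_add_distrib]
    have e4 : ∀ A ∈ hP.toFinset,
        ENNReal.ofReal (α A / 2) + ENNReal.ofReal (α A / 2) = ENNReal.ofReal (α A) := by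
      intro A hA
      rw [Set.Finite.mem_toFinset] at hA
      rw [← ENNReal.ofReal_add (by linarith [hα A hA.1]) (by linarith [hα A hA.1])]
      norm_num
    rw [Finset.sum_congr rfl e4,
      ← ENNReal.ofReal_sum_of_nonneg (fun A hA => by
        rw [Set.Finite.mem_toFinset] at hA
        exact (hα A hA.1).le)]
    congr 1
    rw [hd x y, finsum_mem_eq_finite_toFinset_sum _ hP]
  · intro A hA
    rw [if_neg]
    rintro ⟨hA𝒮, hsep⟩
    rcases Classical.em (x ∈ A) with hx | hx <;> rcases Classical.em (y ∈ A) with hy | hy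
    · exact hsep (iff_of_true hx hy)
    · exact hA (Finset.mem_union_left _ (hP.mem_toFinset.mpr ⟨hA𝒮, hx, hy⟩))
    · exact hA (Finset.mem_union_right _ (hQ.mem_toFinset.mpr ⟨hA𝒮, hy, hx⟩))
    · exact hsep (iff_of_false hx hy)

open Classical in
private lemma keySum (𝒮 : Set (Set X)) (hcompl : ∀ A ∈ 𝒮, Aᶜ ∈ 𝒮)
    (α : Set X → ℝ) (hα : ∀ A ∈ 𝒮, 0 < α A) (hαs : ∀ A ∈ 𝒮, α A = α Aᶜ)
    (hfin : ∀ x y : X, {A | A ∈ 𝒮 ∧ x ∈ A ∧ y ∉ A}.Finite)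
    (d : X → X → ℝ)
    (hd : ∀ x y : X, d x y = ∑ᶠ A ∈ {A | A ∈ 𝒮 ∧ x ∈ A ∧ y ∉ A}, α A)
    (μ : Set X → ℝ) (hμ : memH 𝒮 α μ) (x y : X) :
    dOne 𝒮 μ (phiPoint α x) + dOne 𝒮 μ (phiPoint α y)
      = ENNReal.ofReal (d x y) +
        ∑' A : Set X, (if A ∈ 𝒮 ∧ (x ∈ A ↔ y ∈ A)
          then ENNReal.ofReal (2 * μ (if x ∈ A then A else Aᶜ)) else 0) := by
  have hterm : ∀ (x : X) (A : Set X), A ∈ 𝒮 →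
      ENNReal.ofReal |μ A - phiPoint α x A| =
        ENNReal.ofReal (if x ∈ A then μ A else μ Aᶜ) := by
    intro x A hA
    unfold phiPoint
    by_cases hx : x ∈ A
    · rw [if_pos hx, if_pos hx, sub_zero, abs_of_nonneg (hμ.1 A hA)]
    · rw [if_neg hx, if_neg hx]
      have h2 := hμ.2 A hA
      have h3 : μ A - α A / 2 = -(μ Aᶜ) := by linarith
      rw [h3, abs_neg, abs_of_nonneg (hμ.1 Aᶜ (hcompl A hA))]
  unfold dOne
  rw [tsum_subtype 𝒮 (fun A => ENNReal.ofReal |μ A - phiPoint α x A|),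
    tsum_subtype 𝒮 (fun A => ENNReal.ofReal |μ A - phiPoint α y A|),
    ← ENNReal.tsum_add, ← sepSum 𝒮 hcompl α hα hαs hfin d hd x y, ← ENNReal.tsum_add]
  refine tsum_congr fun A => ?_
  by_cases hA : A ∈ 𝒮
  · rw [Set.indicator_of_mem hA, Set.indicator_of_mem hA, hterm x A hA, hterm y A hA]
    have hμA := hμ.1 A hA
    have hμAc := hμ.1 Aᶜ (hcompl A hA)
    have hsum := hμ.2 A hA
    by_cases hx : x ∈ A <;> by_cases hy : y ∈ A
    · rw [if_pos hx, if_pos hy, if_neg (fun h : A ∈ 𝒮 ∧ ¬(x ∈ A ↔ y ∈ A) =>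
        h.2 (iff_of_true hx hy)), if_pos ⟨hA, iff_of_true hx hy⟩, if_pos hx,
        ← ENNReal.ofReal_add hμA hμA, zero_add]
      exact congrArg ENNReal.ofReal (by ring)
    · rw [if_pos hx, if_neg hy, if_pos ⟨hA, fun h => hy (h.mp hx)⟩,
        if_neg (fun h : A ∈ 𝒮 ∧ (x ∈ A ↔ y ∈ A) => hy (h.2.mp hx)),
        ← ENNReal.ofReal_add hμA hμAc, add_zero]
      exact congrArg ENNReal.ofReal (by linarith)
    · rw [if_neg hx, if_pos hy, if_pos ⟨hA, fun h => hx (h.mpr hy)⟩,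
        if_neg (fun h : A ∈ 𝒮 ∧ (x ∈ A ↔ y ∈ A) => hx (h.2.mpr hy)),
        ← ENNReal.ofReal_add hμAc hμA, add_zero]
      exact congrArg ENNReal.ofReal (by linarith)
    · rw [if_neg hx, if_neg hy, if_neg (fun h : A ∈ 𝒮 ∧ ¬(x ∈ A ↔ y ∈ A) =>
        h.2 (iff_of_false hx hy)), if_pos ⟨hA, iff_of_false hx hy⟩, if_neg hx,
        ← ENNReal.ofReal_add hμAc hμAc, zero_add]
      exact congrArg ENNReal.ofReal (by ring)
  · rw [Set.indicator_of_notMem hA, Set.indicator_of_notMem hA,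
      if_neg (fun h : A ∈ 𝒮 ∧ ¬(x ∈ A ↔ y ∈ A) => hA h.1),
      if_neg (fun h : A ∈ 𝒮 ∧ (x ∈ A ↔ y ∈ A) => hA h.1)]

theorem statement12 (𝒮 : Set (Set X))
    (hsplit : ∀ A ∈ 𝒮, IsSplit A Aᶜ) (hcompl : ∀ A ∈ 𝒮, Aᶜ ∈ 𝒮)
    (α : Set X → ℝ) (hα : ∀ A ∈ 𝒮, 0 < α A) (hαs : ∀ A ∈ 𝒮, α A = α Aᶜ)
    (hfin : ∀ x y : X, {A | A ∈ 𝒮 ∧ x ∈ A ∧ y ∉ A}.Finite)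
    (d : X → X → ℝ)
    (hd : ∀ x y : X, d x y = ∑ᶠ A ∈ {A | A ∈ 𝒮 ∧ x ∈ A ∧ y ∉ A}, α A)
    (hps : IsPseudometric d)
    (μ : Set X → ℝ) (hμ : memH 𝒮 α μ) :
    (∃ f : X → ℝ, (∀ x, dOne 𝒮 μ (phiPoint α x) = ENNReal.ofReal (f x)) ∧
        f ∈ ExtSet' d)
      ↔ memT 𝒮 α μ := by
  classical
  have hd0 : ∀ x y, 0 ≤ d x y := by
    intro x y
    have h2 := hps.2.2 x y x
    have h3 := hps.1 x
    have h4 := hps.2.1 y x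
    linarith
  constructor
  · rintro ⟨f, hf, hfD, hfE⟩
    refine ⟨hμ, ?_⟩
    intro I hI hun
    rw [Set.eq_empty_iff_forall_notMem]
    intro x hx
    obtain ⟨y, hxy⟩ := hfE x
    have hyU : y ∈ ⋃₀ I := hun ▸ Set.mem_univ y
    obtain ⟨A, hAI, hyA⟩ := hyU
    have hAs := hI hAI
    have hA𝒮 : A ∈ 𝒮 := hAs.1
    have hμA : 0 < μ A := hAs.2
    have hxA : x ∈ A := hx A hAI
    have hfx0 : 0 ≤ f x := by have := hfD x x; have := hps.1 x; linarith
    have hfy0 : 0 ≤ f y := by have := hfD y y; have := hps.1 y; linarith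
    have hk := keySum 𝒮 hcompl α hα hαs hfin d hd μ hμ x y
    rw [hf x, hf y, ← ENNReal.ofReal_add hfx0 hfy0, hxy] at hk
    have hR : (∑' A : Set X, (if A ∈ 𝒮 ∧ (x ∈ A ↔ y ∈ A)
          then ENNReal.ofReal (2 * μ (if x ∈ A then A else Aᶜ)) else 0)) = 0 := by
      have h5 : ENNReal.ofReal (d x y) + 0 = ENNReal.ofReal (d x y) +
          ∑' A : Set X, (if A ∈ 𝒮 ∧ (x ∈ A ↔ y ∈ A)
            then ENNReal.ofReal (2 * μ (if x ∈ A then A else Aᶜ)) else 0) := by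
        rw [add_zero]; exact hk
      exact ((ENNReal.add_right_inj ENNReal.ofReal_ne_top).mp h5).symm
    have hle := ENNReal.le_tsum (f := fun A : Set X => if A ∈ 𝒮 ∧ (x ∈ A ↔ y ∈ A)
          then ENNReal.ofReal (2 * μ (if x ∈ A then A else Aᶜ)) else 0) A
    rw [hR, if_pos ⟨hA𝒮, iff_of_true hxA hyA⟩, if_pos hxA, le_zero_iff,
      ENNReal.ofReal_eq_zero] at hle
    linarith
  · intro hT
    have hz : ∀ x : X, ∃ z : X, ∀ A ∈ 𝒮, 0 < μ A → x ∈ A → z ∉ A := by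
      intro x
      by_contra hcon
      push_neg at hcon
      have hcov : ⋃₀ {A | A ∈ 𝒮 ∧ 0 < μ A ∧ x ∈ A} = univ := by
        rw [Set.eq_univ_iff_forall]
        intro w
        obtain ⟨A, hA1, hA2, hA3, hA4⟩ := hcon w
        exact ⟨A, ⟨hA1, hA2, hA3⟩, hA4⟩
      have hsub : {A | A ∈ 𝒮 ∧ 0 < μ A ∧ x ∈ A} ⊆ suppOf 𝒮 μ :=
        fun A hA => ⟨hA.1, hA.2.1⟩
      have hint := hT.2 _ hsub hcov
      have hxmem : x ∈ ⋂₀ {A | A ∈ 𝒮 ∧ 0 < μ A ∧ x ∈ A} :=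
        fun A hA => hA.2.2
      rw [hint] at hxmem
      exact hxmem
    choose z hzp using hz
    have hR : ∀ x, (∑' A : Set X, (if A ∈ 𝒮 ∧ (x ∈ A ↔ z x ∈ A)
          then ENNReal.ofReal (2 * μ (if x ∈ A then A else Aᶜ)) else 0)) = 0 := by
      intro x
      rw [ENNReal.tsum_eq_zero]
      intro A
      split_ifs with h h2
      · rw [ENNReal.ofReal_eq_zero]
        have hA0 : μ A = 0 := by
          by_contra hne
          have hpos : 0 < μ A := lt_of_le_of_ne (hμ.1 A h.1) (Ne.symm hne)
          exact hzp x A h.1 hpos h2 (h.2.mp h2)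
        linarith
      · rw [ENNReal.ofReal_eq_zero]
        have hxc : x ∈ Aᶜ := h2
        have hA0 : μ Aᶜ = 0 := by
          by_contra hne
          have hpos : 0 < μ Aᶜ := lt_of_le_of_ne (hμ.1 Aᶜ (hcompl A h.1)) (Ne.symm hne)
          have hznA : z x ∉ A := fun hzA => h2 (h.2.mpr hzA)
          exact hzp x Aᶜ (hcompl A h.1) hpos hxc hznA
        linarith
      · rfl
    have hkey : ∀ x, dOne 𝒮 μ (phiPoint α x) + dOne 𝒮 μ (phiPoint α (z x))
        = ENNReal.ofReal (d x (z x)) := by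
      intro x
      rw [keySum 𝒮 hcompl α hα hαs hfin d hd μ hμ x (z x), hR x, add_zero]
    have hfin' : ∀ x, dOne 𝒮 μ (phiPoint α x) ≠ ⊤ := by
      intro x
      have hle : dOne 𝒮 μ (phiPoint α x) ≤ ENNReal.ofReal (d x (z x)) := by
        rw [← hkey x]; exact le_self_add
      exact ne_top_of_le_ne_top ENNReal.ofReal_ne_top hle
    refine ⟨fun x => (dOne 𝒮 μ (phiPoint α x)).toReal,
      fun x => (ENNReal.ofReal_toReal (hfin' x)).symm, ?_, ?_⟩
    · intro x y
      have hk := keySum 𝒮 hcompl α hα hαs hfin d hd μ hμ x y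
      have h1 : ENNReal.ofReal (d x y)
          ≤ dOne 𝒮 μ (phiPoint α x) + dOne 𝒮 μ (phiPoint α y) := by
        rw [hk]; exact le_self_add
      have h2 := ENNReal.toReal_mono (ENNReal.add_ne_top.mpr ⟨hfin' x, hfin' y⟩) h1
      rwa [ENNReal.toReal_ofReal (hd0 x y), ENNReal.toReal_add (hfin' x) (hfin' y)] at h2
    · intro x
      refine ⟨z x, ?_⟩
      rw [← ENNReal.toReal_add (hfin' x) (hfin' (z x)), hkey x,
        ENNReal.toReal_ofReal (hd0 x (z x))]
end
end

section
/- Let (S,α) be a split system pair on a set X such that d := ∑_{S ∈ S} α_S δ_S defines a pseudometric on X. Then every cell [φ] of T̄(S,α) is X-gated with respect to the embedding x ↦ φ_x and the metric d₁: for every x ∈ X there exists γ ∈ [φ] such that d₁(φ_x, ψ) = d₁(φ_x, γ) + d₁(γ, ψ) for all ψ ∈ [φ]. Explicitly, the gate is γ^x_{[φ]} defined by γ^x_{[φ]}(A) = φ_x(A) for A ∈ U(S(φ)) and γ^x_{[φ]}(A) = φ(A) for A ∈ U(S ∖ S(φ)). -/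
open Set Function

noncomputable section

variable {X : Type*}

open scoped ENNReal

theorem statement14 (𝒮 : Set (Set X))
    (hsplit : ∀ A ∈ 𝒮, IsSplit A Aᶜ) (hcompl : ∀ A ∈ 𝒮, Aᶜ ∈ 𝒮)
    (α : Set X → ℝ) (hα : ∀ A ∈ 𝒮, 0 < α A) (hαs : ∀ A ∈ 𝒮, α A = α Aᶜ)
    (hfin : ∀ x y : X, {A | A ∈ 𝒮 ∧ x ∈ A ∧ y ∉ A}.Finite)
    (d : X → X → ℝ)
    (hd : ∀ x y : X, d x y = ∑ᶠ A ∈ {A | A ∈ 𝒮 ∧ x ∈ A ∧ y ∉ A}, α A)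
    (hps : IsPseudometric d)
    (φ : Set X → ℝ) (hφ : memT 𝒮 α φ) (x : X) :
    memCell 𝒮 α φ (gateAt 𝒮 α φ x) ∧
      ∀ ψ : Set X → ℝ, memCell 𝒮 α φ ψ →
        dOne 𝒮 (phiPoint α x) ψ =
          dOne 𝒮 (phiPoint α x) (gateAt 𝒮 α φ x) + dOne 𝒮 (gateAt 𝒮 α φ x) ψ := by
  classical
  obtain ⟨⟨hφ0, hφsum⟩, hφT⟩ := hφ
  set γ := gateAt 𝒮 α φ x with hγdef
  -- basic facts about γ
  have hγ_of : ∀ A, A ∈ 𝒮 → 0 < φ A → 0 < φ Aᶜ → γ A = phiPoint α x A := by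
    intro A hA h1 h2
    simp only [hγdef, gateAt]
    rw [if_pos ⟨hA, h1, h2⟩]
  have hγ_not : ∀ A, ¬(A ∈ 𝒮 ∧ 0 < φ A ∧ 0 < φ Aᶜ) → γ A = φ A := by
    intro A h
    simp only [hγdef, gateAt, if_neg h]
  have hφx0 : ∀ A ∈ 𝒮, 0 ≤ phiPoint α x A := by
    intro A hA
    unfold phiPoint
    split
    · exact le_refl 0
    · linarith [hα A hA]
  have hγ0 : ∀ A ∈ 𝒮, 0 ≤ γ A := by
    intro A hA
    by_cases hC : A ∈ 𝒮 ∧ 0 < φ A ∧ 0 < φ Aᶜ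
    · rw [hγ_of A hC.1 hC.2.1 hC.2.2]; exact hφx0 A hA
    · rw [hγ_not A hC]; exact hφ0 A hA
  have hγsum : ∀ A ∈ 𝒮, γ A + γ Aᶜ = α A / 2 := by
    intro A hA
    have hA' : Aᶜ ∈ 𝒮 := hcompl A hA
    by_cases hC : 0 < φ A ∧ 0 < φ Aᶜ
    · have h1 : γ A = phiPoint α x A := hγ_of A hA hC.1 hC.2
      have h2 : γ Aᶜ = phiPoint α x Aᶜ := by
        have := hγ_of Aᶜ hA' hC.2 (by rw [compl_compl]; exact hC.1)
        exact this
      rw [h1, h2]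
      by_cases hx : x ∈ A
      · have hx' : x ∉ Aᶜ := by simp [hx]
        simp [phiPoint, hx, hx', ← hαs A hA]
      · have hx' : x ∈ Aᶜ := by simp [hx]
        simp [phiPoint, hx, hx']
    · have hC' : ¬(0 < φ Aᶜ ∧ 0 < φ Aᶜᶜ) := by
        rw [compl_compl]; tauto
      rw [hγ_not A (by tauto), hγ_not Aᶜ (by tauto)]
      exact hφsum A hA
  have hcell : memCell 𝒮 α φ γ := by
    refine ⟨⟨hγ0, hγsum⟩, ?_⟩
    rintro A ⟨hA, hApos⟩
    refine ⟨hA, ?_⟩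
    by_cases hC : A ∈ 𝒮 ∧ 0 < φ A ∧ 0 < φ Aᶜ
    · exact hC.2.1
    · rw [hγ_not A hC] at hApos; exact hApos
  refine ⟨hcell, ?_⟩
  intro ψ hψ
  obtain ⟨⟨hψ0, hψsum⟩, hψsupp⟩ := hψ
  have hψz : ∀ A ∈ 𝒮, φ A = 0 → ψ A = 0 := by
    intro A hA hφA
    by_contra h
    have hApos : 0 < ψ A := lt_of_le_of_ne (hψ0 A hA) (Ne.symm h)
    have := hψsupp ⟨hA, hApos⟩
    exact absurd this.2 (by rw [hφA]; exact lt_irrefl 0)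
  have hterm : ∀ A ∈ 𝒮,
      |phiPoint α x A - ψ A| = |phiPoint α x A - γ A| + |γ A - ψ A| := by
    intro A hA
    have hA' : Aᶜ ∈ 𝒮 := hcompl A hA
    by_cases hC : 0 < φ A ∧ 0 < φ Aᶜ
    · rw [hγ_of A hA hC.1 hC.2]
      simp
    · have hγA : γ A = φ A := hγ_not A (by tauto)
      have hγψ : γ A = ψ A := by
        rcases not_and_or.mp hC with h1 | h2
        · have hφA : φ A = 0 := le_antisymm (not_lt.mp h1) (hφ0 A hA)
          rw [hγA, hφA, hψz A hA hφA]
        · have hφAc : φ Aᶜ = 0 := le_antisymm (not_lt.mp h2) (hφ0 Aᶜ hA')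
          have hψAc : ψ Aᶜ = 0 := hψz Aᶜ hA' hφAc
          have hφA : φ A = α A / 2 := by have := hφsum A hA; linarith
          have hψA : ψ A = α A / 2 := by have := hψsum A hA; linarith
          rw [hγA, hφA, hψA]
      rw [hγψ]
      simp
  unfold dOne
  rw [← ENNReal.tsum_add]
  apply tsum_congr
  rintro ⟨A, hA⟩
  rw [← ENNReal.ofReal_add (abs_nonneg _) (abs_nonneg _), ← hterm A hA]
end
end

section
/- Let (S,α) be a split system pair on a set X such that d := ∑_{S ∈ S} α_S δ_S defines a pseudometric on X. For every cell [φ] of T̄(S,α), the set of gates Γ([φ]) := {γ^x_{[φ]} : x ∈ X}, equipped with the metric d₁, is an antipodal metric space: there exists an involution σ of Γ([φ]) such that d₁(γ, σ(γ)) = d₁(γ, ψ) + d₁(ψ, σ(γ)) for all γ, ψ ∈ Γ([φ]). -/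
open Set Function

noncomputable section

variable {X : Type*}

open scoped ENNReal

section AuxStatement15
variable {X : Type*}

open Classical in
lemma gateAt_apply' (𝒮 : Set (Set X)) (α : Set X → ℝ) (φ : Set X → ℝ) (x : X) (A : Set X) :
    gateAt 𝒮 α φ x A =
      if A ∈ 𝒮 ∧ 0 < φ A ∧ 0 < φ Aᶜ then (if x ∈ A then 0 else α A / 2) else φ A := rfl

lemma gate_mem_iff' {𝒮 : Set (Set X)} {α φ : Set X → ℝ}
    (hα : ∀ A ∈ 𝒮, 0 < α A) {x y : X} (h : gateAt 𝒮 α φ x = gateAt 𝒮 α φ y)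
    {A : Set X} (hA : A ∈ 𝒮 ∧ 0 < φ A ∧ 0 < φ Aᶜ) : x ∈ A ↔ y ∈ A := by
  have hh := congrFun h A
  rw [gateAt_apply', gateAt_apply', if_pos hA, if_pos hA] at hh
  have hpos : 0 < α A / 2 := by linarith [hα A hA.1]
  by_cases hx : x ∈ A <;> by_cases hy : y ∈ A <;>
    simp [hx, hy] at hh ⊢ <;> linarith

lemma gate_eq_of' {𝒮 : Set (Set X)} {α φ : Set X → ℝ} {x y : X}
    (h : ∀ A, A ∈ 𝒮 → 0 < φ A → 0 < φ Aᶜ → (x ∈ A ↔ y ∈ A)) :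
    gateAt 𝒮 α φ x = gateAt 𝒮 α φ y := by
  funext A
  rw [gateAt_apply', gateAt_apply']
  by_cases hA : A ∈ 𝒮 ∧ 0 < φ A ∧ 0 < φ Aᶜ
  · rw [if_pos hA, if_pos hA]
    have hm := h A hA.1 hA.2.1 hA.2.2
    by_cases hx : x ∈ A
    · rw [if_pos hx, if_pos (hm.mp hx)]
    · rw [if_neg hx, if_neg (fun hh => hx (hm.mpr hh))]
  · rw [if_neg hA, if_neg hA]

lemma exists_opp' {𝒮 : Set (Set X)} {α φ : Set X → ℝ}
    (hcompl : ∀ A ∈ 𝒮, Aᶜ ∈ 𝒮) (hφ : memT 𝒮 α φ) (x : X) :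
    ∃ y : X, ∀ A, A ∈ 𝒮 → 0 < φ A → 0 < φ Aᶜ → (y ∈ A ↔ x ∉ A) := by
  set I : Set (Set X) := {A | A ∈ 𝒮 ∧ x ∈ A ∧ 0 < φ A ∧ 0 < φ Aᶜ} with hI
  have hsub : I ⊆ suppOf 𝒮 φ := fun A hA => ⟨hA.1, hA.2.2.1⟩
  have hne : ⋃₀ I ≠ univ := by
    intro hcov
    have hempty := hφ.2 I hsub hcov
    have hx : x ∈ ⋂₀ I := fun A hA => hA.2.1
    rw [hempty] at hx
    exact hx
  obtain ⟨y, hy⟩ : ∃ y, y ∉ ⋃₀ I := by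
    by_contra h
    push_neg at h
    exact hne (eq_univ_of_forall h)
  refine ⟨y, fun A hA h1 h2 => ?_⟩
  constructor
  · intro hyA hxA
    exact hy ⟨A, ⟨hA, hxA, h1, h2⟩, hyA⟩
  · intro hxA
    by_contra hyA
    exact hy ⟨Aᶜ, ⟨hcompl A hA, hxA, h2, by simpa using h1⟩, hyA⟩

end AuxStatement15

theorem statement15 (𝒮 : Set (Set X))
    (hsplit : ∀ A ∈ 𝒮, IsSplit A Aᶜ) (hcompl : ∀ A ∈ 𝒮, Aᶜ ∈ 𝒮)
    (α : Set X → ℝ) (hα : ∀ A ∈ 𝒮, 0 < α A) (hαs : ∀ A ∈ 𝒮, α A = α Aᶜ)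
    (hfin : ∀ x y : X, {A | A ∈ 𝒮 ∧ x ∈ A ∧ y ∉ A}.Finite)
    (d : X → X → ℝ)
    (hd : ∀ x y : X, d x y = ∑ᶠ A ∈ {A | A ∈ 𝒮 ∧ x ∈ A ∧ y ∉ A}, α A)
    (hps : IsPseudometric d)
    (φ : Set X → ℝ) (hφ : memT 𝒮 α φ) :
    ∃ σ : (Set X → ℝ) → (Set X → ℝ),
      (∀ g ∈ {g : Set X → ℝ | ∃ x : X, g = gateAt 𝒮 α φ x},
        σ g ∈ {g : Set X → ℝ | ∃ x : X, g = gateAt 𝒮 α φ x}) ∧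
      (∀ g ∈ {g : Set X → ℝ | ∃ x : X, g = gateAt 𝒮 α φ x}, σ (σ g) = g) ∧
      ∀ g ∈ {g : Set X → ℝ | ∃ x : X, g = gateAt 𝒮 α φ x},
        ∀ ψ ∈ {g : Set X → ℝ | ∃ x : X, g = gateAt 𝒮 α φ x},
          dOne 𝒮 g (σ g) = dOne 𝒮 g ψ + dOne 𝒮 ψ (σ g) := by
  classical
  rcases isEmpty_or_nonempty X with hX | hX
  · refine ⟨id, ?_, ?_, ?_⟩ <;> intro g hg <;> exact absurd hg (by simp [hX.false])
  have opp : ∀ x : X, ∃ y : X, ∀ A, A ∈ 𝒮 → 0 < φ A → 0 < φ Aᶜ → (y ∈ A ↔ x ∉ A) :=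
    exists_opp' hcompl hφ
  let F : X → X := fun x => (opp x).choose
  have hF : ∀ x, ∀ A, A ∈ 𝒮 → 0 < φ A → 0 < φ Aᶜ → (F x ∈ A ↔ x ∉ A) :=
    fun x => (opp x).choose_spec
  let W : (Set X → ℝ) → X := fun g => Classical.epsilon (fun x => g = gateAt 𝒮 α φ x)
  have hW : ∀ g, (∃ x, g = gateAt 𝒮 α φ x) → g = gateAt 𝒮 α φ (W g) :=
    fun g hg => Classical.epsilon_spec hg
  refine ⟨fun g => gateAt 𝒮 α φ (F (W g)), ?_, ?_, ?_⟩
  · intro g _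
    exact ⟨F (W g), rfl⟩
  · intro g hg
    have hw1 : g = gateAt 𝒮 α φ (W g) := hW g hg
    set w1 := W g with hw1def
    set g2 := gateAt 𝒮 α φ (F w1) with hg2def
    have hw2 : g2 = gateAt 𝒮 α φ (W g2) := hW g2 ⟨F w1, rfl⟩
    set w2 := W g2 with hw2def
    have heq : gateAt 𝒮 α φ (F w1) = gateAt 𝒮 α φ w2 := hw2
    have key2 : gateAt 𝒮 α φ (F w2) = gateAt 𝒮 α φ w1 := by
      apply gate_eq_of'
      intro A hA h1 h2
      have e1 : F w1 ∈ A ↔ w2 ∈ A := gate_mem_iff' hα heq ⟨hA, h1, h2⟩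
      have e2 : F w1 ∈ A ↔ w1 ∉ A := hF w1 A hA h1 h2
      have e3 : F w2 ∈ A ↔ w2 ∉ A := hF w2 A hA h1 h2
      tauto
    show gateAt 𝒮 α φ (F w2) = g
    rw [key2, ← hw1]
  · intro g hg ψ hψ
    obtain ⟨x, rfl⟩ := hg
    obtain ⟨z, rfl⟩ := hψ
    have hw : gateAt 𝒮 α φ x = gateAt 𝒮 α φ (W (gateAt 𝒮 α φ x)) :=
      hW _ ⟨x, rfl⟩
    set w := W (gateAt 𝒮 α φ x) with hwdef
    set y := F w with hydef
    have key : ∀ A : Set X, A ∈ 𝒮 →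
        |gateAt 𝒮 α φ x A - gateAt 𝒮 α φ y A| =
        |gateAt 𝒮 α φ x A - gateAt 𝒮 α φ z A| +
          |gateAt 𝒮 α φ z A - gateAt 𝒮 α φ y A| := by
      intro A hA
      by_cases hD : A ∈ 𝒮 ∧ 0 < φ A ∧ 0 < φ Aᶜ
      · have hxm : x ∈ A ↔ w ∈ A := gate_mem_iff' hα hw hD
        have hym : y ∈ A ↔ w ∉ A := hF w A hD.1 hD.2.1 hD.2.2
        have hyx : y ∈ A ↔ x ∉ A := hym.trans (not_congr hxm).symm
        rw [gateAt_apply', gateAt_apply', gateAt_apply',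
          if_pos hD, if_pos hD, if_pos hD]
        by_cases hxa : x ∈ A <;> by_cases hza : z ∈ A
        · have hya : y ∉ A := fun h => (hyx.mp h) hxa
          simp [hxa, hza, hya]
        · have hya : y ∉ A := fun h => (hyx.mp h) hxa
          simp [hxa, hza, hya]
        · have hya : y ∈ A := hyx.mpr hxa
          simp [hxa, hza, hya]
        · have hya : y ∈ A := hyx.mpr hxa
          simp [hxa, hza, hya, abs_sub_comm]
      · rw [gateAt_apply', gateAt_apply', gateAt_apply',
          if_neg hD, if_neg hD, if_neg hD]
        simp
    show dOne 𝒮 (gateAt 𝒮 α φ x) (gateAt 𝒮 α φ y) =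
      dOne 𝒮 (gateAt 𝒮 α φ x) (gateAt 𝒮 α φ z) + dOne 𝒮 (gateAt 𝒮 α φ z) (gateAt 𝒮 α φ y)
    unfold dOne
    calc ∑' A : 𝒮, ENNReal.ofReal |gateAt 𝒮 α φ x ↑A - gateAt 𝒮 α φ y ↑A|
        = ∑' A : 𝒮, (ENNReal.ofReal |gateAt 𝒮 α φ x ↑A - gateAt 𝒮 α φ z ↑A|
            + ENNReal.ofReal |gateAt 𝒮 α φ z ↑A - gateAt 𝒮 α φ y ↑A|) := by
          apply tsum_congr
          intro A
          rw [key A A.2, ENNReal.ofReal_add (abs_nonneg _) (abs_nonneg _)]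
      _ = _ := ENNReal.tsum_add
end
end

section
/- Let (S,α) be a split system pair on a set X. The Buneman complex B(S,α) satisfies the CAT(0) link condition: if μ, μ₂¹, μ₂², μ₂³ ∈ B(S,α) and μ₁¹, μ₁², μ₁³ ∈ B(S,α) are such that supp(μ) = ∩_{i∈{1,2,3}} supp(μ₂^i), supp(μ₁^j) = ∩_{i ∈ {1,2,3}∖{j}} supp(μ₂^i) for each j, |S(μ)| = k ≥ 0, |S(μ₁^j)| = k+1 and |S(μ₂^i)| = k+2 for all i,j, then there exists ψ ∈ B(S,α) with supp(ψ) = ∪_{i∈{1,2,3}} supp(μ₂^i) and |S(ψ)| = k+3; in particular the cell [ψ] contains the cells [μ₂^i] for i = 1,2,3. -/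
open Set Function

noncomputable section

variable {X : Type*}

open scoped ENNReal

/-- The set of splits `S(μ)` with both parts in the support of `μ`, as unordered pairs
`{A, Aᶜ}`. -/
def splitsIn (𝒮 : Set (Set X)) (μ : Set X → ℝ) : Set (Set (Set X)) :=
  {p | ∃ A ∈ 𝒮, 0 < μ A ∧ 0 < μ Aᶜ ∧ p = {A, Aᶜ}}


/-- Auxiliary: the set of unordered pairs `{A, Aᶜ}` with both parts in `T`. -/
def SPairs (T : Set (Set X)) : Set (Set (Set X)) :=
  {p | ∃ A, A ∈ T ∧ Aᶜ ∈ T ∧ p = {A, Aᶜ}}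

lemma SPairs_mono {s t : Set (Set X)} (h : s ⊆ t) : SPairs s ⊆ SPairs t := by
  rintro p ⟨A, hA, hAc, rfl⟩; exact ⟨A, h hA, h hAc, rfl⟩

lemma mem_of_mem_SPairs {T : Set (Set X)} {p : Set (Set X)} (hp : p ∈ SPairs T)
    {A : Set X} (hA : A ∈ p) : A ∈ T := by
  obtain ⟨B, hB, hBc, rfl⟩ := hp
  simp only [Set.mem_insert_iff, Set.mem_singleton_iff] at hA
  rcases hA with rfl | rfl
  · exact hB
  · exact hBc

lemma SPairs_inter (s t : Set (Set X)) : SPairs (s ∩ t) = SPairs s ∩ SPairs t := by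
  ext p
  constructor
  · rintro ⟨A, hA, hAc, rfl⟩
    exact ⟨⟨A, hA.1, hAc.1, rfl⟩, ⟨A, hA.2, hAc.2, rfl⟩⟩
  · rintro ⟨⟨A, hA, hAc, rfl⟩, hp2⟩
    exact ⟨A, ⟨hA, mem_of_mem_SPairs hp2 (by simp)⟩,
      ⟨hAc, mem_of_mem_SPairs hp2 (by simp)⟩, rfl⟩

lemma splitsIn_eq_SPairs {𝒮 : Set (Set X)} (hcompl : ∀ A ∈ 𝒮, Aᶜ ∈ 𝒮) (ν : Set X → ℝ) :
    splitsIn 𝒮 ν = SPairs (suppOf 𝒮 ν) := by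
  ext p
  constructor
  · rintro ⟨A, hA, h1, h2, rfl⟩
    exact ⟨A, ⟨hA, h1⟩, ⟨hcompl A hA, h2⟩, rfl⟩
  · rintro ⟨A, ⟨hA, h1⟩, ⟨hAc, h2⟩, rfl⟩
    exact ⟨A, hA, h1, h2, rfl⟩

theorem statement18 (𝒮 : Set (Set X))
    (hsplit : ∀ A ∈ 𝒮, IsSplit A Aᶜ) (hcompl : ∀ A ∈ 𝒮, Aᶜ ∈ 𝒮)
    (α : Set X → ℝ) (hα : ∀ A ∈ 𝒮, 0 < α A) (hαs : ∀ A ∈ 𝒮, α A = α Aᶜ)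
    (k : ℕ) (μ : Set X → ℝ) (μ₁ μ₂ : Fin 3 → Set X → ℝ)
    (hμ : memB 𝒮 α μ) (hμ₁ : ∀ j, memB 𝒮 α (μ₁ j)) (hμ₂ : ∀ i, memB 𝒮 α (μ₂ i))
    (hsupp : suppOf 𝒮 μ = ⋂ i, suppOf 𝒮 (μ₂ i))
    (hsupp₁ : ∀ j, suppOf 𝒮 (μ₁ j) = ⋂ i ∈ ({j}ᶜ : Set (Fin 3)), suppOf 𝒮 (μ₂ i))
    (hfinμ : (splitsIn 𝒮 μ).Finite)
    (hk : (splitsIn 𝒮 μ).ncard = k)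
    (hk₁ : ∀ j, (splitsIn 𝒮 (μ₁ j)).ncard = k + 1)
    (hk₂ : ∀ i, (splitsIn 𝒮 (μ₂ i)).ncard = k + 2) :
    ∃ ψ : Set X → ℝ, memB 𝒮 α ψ ∧
      suppOf 𝒮 ψ = ⋃ i, suppOf 𝒮 (μ₂ i) ∧
      (splitsIn 𝒮 ψ).ncard = k + 3 ∧
      ∀ i, suppOf 𝒮 (μ₂ i) ⊆ suppOf 𝒮 ψ := by
  classical
  -- membership characterizations
  have hPmem : ∀ x, x ∈ suppOf 𝒮 μ ↔ ∀ i, x ∈ suppOf 𝒮 (μ₂ i) := by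
    intro x; rw [hsupp]; simp
  have hQmem : ∀ j x, x ∈ suppOf 𝒮 (μ₁ j) ↔ ∀ i, i ≠ j → x ∈ suppOf 𝒮 (μ₂ i) := by
    intro j x; rw [hsupp₁ j]; simp
  have hQeq : ∀ i j l : Fin 3, i ≠ j → i ≠ l → j ≠ l →
      suppOf 𝒮 (μ₁ l) = suppOf 𝒮 (μ₂ i) ∩ suppOf 𝒮 (μ₂ j) := by
    intro i j l hij hil hjl
    ext x
    simp only [Set.mem_inter_iff, hQmem]
    constructor
    · intro h; exact ⟨h i hil, h j hjl⟩
    · rintro ⟨h1, h2⟩ m hm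
      have ei : i.val ≠ j.val := fun h => hij (Fin.val_injective h)
      have em : m.val ≠ l.val := fun h => hm (Fin.val_injective h)
      have eil : i.val ≠ l.val := fun h => hil (Fin.val_injective h)
      have ejl : j.val ≠ l.val := fun h => hjl (Fin.val_injective h)
      have h3m := m.isLt; have h3i := i.isLt; have h3j := j.isLt; have h3l := l.isLt
      have : m.val = i.val ∨ m.val = j.val := by omega
      rcases this with h | h
      · rw [Fin.val_injective h]; exact h1
      · rw [Fin.val_injective h]; exact h2
  have hPeq : ∀ i j l : Fin 3, i ≠ j → i ≠ l → j ≠ l →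
      suppOf 𝒮 μ = suppOf 𝒮 (μ₂ i) ∩ suppOf 𝒮 (μ₂ j) ∩ suppOf 𝒮 (μ₂ l) := by
    intro i j l hij hil hjl
    ext x
    simp only [Set.mem_inter_iff, hPmem]
    constructor
    · intro h; exact ⟨⟨h i, h j⟩, h l⟩
    · rintro ⟨⟨h1, h2⟩, h3⟩ m
      have ei : i.val ≠ j.val := fun h => hij (Fin.val_injective h)
      have eil : i.val ≠ l.val := fun h => hil (Fin.val_injective h)
      have ejl : j.val ≠ l.val := fun h => hjl (Fin.val_injective h)
      have h3m := m.isLt; have h3i := i.isLt; have h3j := j.isLt; have h3l := l.isLt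
      have : m.val = i.val ∨ m.val = j.val ∨ m.val = l.val := by omega
      rcases this with h | h | h
      · rw [Fin.val_injective h]; exact h1
      · rw [Fin.val_injective h]; exact h2
      · rw [Fin.val_injective h]; exact h3
  -- one part of each split is in the support of μ
  have hone : ∀ A ∈ 𝒮, A ∈ suppOf 𝒮 μ ∨ Aᶜ ∈ suppOf 𝒮 μ := by
    intro A hA
    have h1 := hμ.1.1 A hA
    have hAc := hcompl A hA
    have h2 := hμ.1.1 Aᶜ hAc
    have h3 := hμ.1.2 A hA
    have h4 := hα A hA
    by_cases h : 0 < μ A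
    · exact Or.inl ⟨hA, h⟩
    · push_neg at h
      exact Or.inr ⟨hAc, by linarith⟩
  -- restated cardinality facts
  rw [splitsIn_eq_SPairs hcompl] at hk hfinμ
  have hk₁' : ∀ j, (SPairs (suppOf 𝒮 (μ₁ j))).ncard = k + 1 := by
    intro j; rw [← splitsIn_eq_SPairs hcompl]; exact hk₁ j
  have hk₂' : ∀ i, (SPairs (suppOf 𝒮 (μ₂ i))).ncard = k + 2 := by
    intro i; rw [← splitsIn_eq_SPairs hcompl]; exact hk₂ i
  have hfin2 : ∀ i, (SPairs (suppOf 𝒮 (μ₂ i))).Finite := by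
    intro i; by_contra h
    have h0 := Set.Infinite.ncard h
    rw [hk₂' i] at h0; omega
  have hfin1 : ∀ j, (SPairs (suppOf 𝒮 (μ₁ j))).Finite := by
    intro j; by_contra h
    have h0 := Set.Infinite.ncard h
    rw [hk₁' j] at h0; omega
  -- decomposition of S(μ₂ i)
  have hdec : ∀ i j l : Fin 3, i ≠ j → i ≠ l → j ≠ l →
      SPairs (suppOf 𝒮 (μ₂ i)) =
        SPairs (suppOf 𝒮 (μ₁ l)) ∪ SPairs (suppOf 𝒮 (μ₁ j)) := by
    intro i j l hij hil hjl
    have e1 : SPairs (suppOf 𝒮 (μ₁ l)) =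
        SPairs (suppOf 𝒮 (μ₂ i)) ∩ SPairs (suppOf 𝒮 (μ₂ j)) := by
      rw [hQeq i j l hij hil hjl, SPairs_inter]
    have e2 : SPairs (suppOf 𝒮 (μ₁ j)) =
        SPairs (suppOf 𝒮 (μ₂ i)) ∩ SPairs (suppOf 𝒮 (μ₂ l)) := by
      rw [hQeq i l j hil hij (Ne.symm hjl), SPairs_inter]
    have e3 : SPairs (suppOf 𝒮 (μ₁ l)) ∩ SPairs (suppOf 𝒮 (μ₁ j)) =
        SPairs (suppOf 𝒮 μ) := by
      have hset : suppOf 𝒮 (μ₁ l) ∩ suppOf 𝒮 (μ₁ j) = suppOf 𝒮 μ := by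
        rw [hQeq i j l hij hil hjl, hQeq i l j hil hij (Ne.symm hjl),
          hPeq i j l hij hil hjl]
        ext x
        constructor
        · rintro ⟨⟨h1, h2⟩, -, h3⟩; exact ⟨⟨h1, h2⟩, h3⟩
        · rintro ⟨⟨h1, h2⟩, h3⟩; exact ⟨⟨h1, h2⟩, h1, h3⟩
      rw [← SPairs_inter, hset]
    have hsub : SPairs (suppOf 𝒮 (μ₁ l)) ∪ SPairs (suppOf 𝒮 (μ₁ j)) ⊆
        SPairs (suppOf 𝒮 (μ₂ i)) := by
      rw [e1, e2]
      exact Set.union_subset Set.inter_subset_left Set.inter_subset_left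
    have hcount := Set.ncard_union_add_ncard_inter (SPairs (suppOf 𝒮 (μ₁ l)))
      (SPairs (suppOf 𝒮 (μ₁ j))) (hfin1 l) (hfin1 j)
    rw [e3, hk₁' l, hk₁' j, hk] at hcount
    refine (Set.eq_of_subset_of_ncard_le hsub ?_ (hfin2 i)).symm
    rw [hk₂' i]; omega
  -- any two supported parts live in a common μ₂ support
  have hcommon : ∀ A ∈ ⋃ i, suppOf 𝒮 (μ₂ i), ∀ B ∈ ⋃ i, suppOf 𝒮 (μ₂ i),
      ∃ l, A ∈ suppOf 𝒮 (μ₂ l) ∧ B ∈ suppOf 𝒮 (μ₂ l) := by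
    intro A hA B hB
    simp only [Set.mem_iUnion] at hA hB
    obtain ⟨i, hAi⟩ := hA
    obtain ⟨j, hBj⟩ := hB
    by_cases hAj : A ∈ suppOf 𝒮 (μ₂ j)
    · exact ⟨j, hAj, hBj⟩
    by_cases hBi : B ∈ suppOf 𝒮 (μ₂ i)
    · exact ⟨i, hAi, hBi⟩
    have hij : i ≠ j := fun h => hAj (h ▸ hAi)
    have hivj : i.val ≠ j.val := fun h => hij (Fin.val_injective h)
    have h3i := i.isLt; have h3j := j.isLt
    obtain ⟨l, hl1, hl2⟩ : ∃ l : Fin 3, i ≠ l ∧ j ≠ l := by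
      refine ⟨⟨3 - i.val - j.val, by omega⟩, ?_, ?_⟩ <;>
        · intro h
          have h' : _ = 3 - i.val - j.val := congrArg Fin.val h
          omega
    have hAS : A ∈ 𝒮 := hAi.1
    have hBS : B ∈ 𝒮 := hBj.1
    have hAc : Aᶜ ∈ suppOf 𝒮 μ := by
      rcases hone A hAS with h | h
      · exact absurd ((hPmem A).1 h j) hAj
      · exact h
    have hBc : Bᶜ ∈ suppOf 𝒮 μ := by
      rcases hone B hBS with h | h
      · exact absurd ((hPmem B).1 h i) hBi
      · exact h
    refine ⟨l, ?_, ?_⟩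
    · have hpA : ({A, Aᶜ} : Set (Set X)) ∈ SPairs (suppOf 𝒮 (μ₂ i)) :=
        ⟨A, hAi, (hPmem Aᶜ).1 hAc i, rfl⟩
      rw [hdec i j l hij hl1 hl2] at hpA
      have hsubl : SPairs (suppOf 𝒮 (μ₁ l)) ⊆ SPairs (suppOf 𝒮 (μ₂ j)) := by
        rw [hQeq i j l hij hl1 hl2]
        exact SPairs_mono Set.inter_subset_right
      have hsubj : SPairs (suppOf 𝒮 (μ₁ j)) ⊆ SPairs (suppOf 𝒮 (μ₂ l)) := by
        rw [hQeq i l j hl1 hij (Ne.symm hl2)]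
        exact SPairs_mono Set.inter_subset_right
      rcases hpA with h | h
      · exact absurd (mem_of_mem_SPairs (hsubl h) (by simp)) hAj
      · exact mem_of_mem_SPairs (hsubj h) (by simp)
    · have hpB : ({B, Bᶜ} : Set (Set X)) ∈ SPairs (suppOf 𝒮 (μ₂ j)) :=
        ⟨B, hBj, (hPmem Bᶜ).1 hBc j, rfl⟩
      rw [hdec j i l (Ne.symm hij) hl2 hl1] at hpB
      have hsubl' : SPairs (suppOf 𝒮 (μ₁ l)) ⊆ SPairs (suppOf 𝒮 (μ₂ i)) := by
        rw [hQeq j i l (Ne.symm hij) hl2 hl1]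
        exact SPairs_mono Set.inter_subset_right
      have hsubi' : SPairs (suppOf 𝒮 (μ₁ i)) ⊆ SPairs (suppOf 𝒮 (μ₂ l)) := by
        rw [hQeq j l i hl2 (Ne.symm hij) (Ne.symm hl1)]
        exact SPairs_mono Set.inter_subset_right
      rcases hpB with h | h
      · exact absurd (mem_of_mem_SPairs (hsubl' h) (by simp)) hBi
      · exact mem_of_mem_SPairs (hsubi' h) (by simp)
  -- the candidate ψ
  set ψ : Set X → ℝ := fun A => (μ₂ 0 A + μ₂ 1 A + μ₂ 2 A) / 3 with hψdef
  have hψH : memH 𝒮 α ψ := by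
    constructor
    · intro A hA
      have h0 := (hμ₂ 0).1.1 A hA; have h1 := (hμ₂ 1).1.1 A hA
      have h2 := (hμ₂ 2).1.1 A hA
      simp only [hψdef]; linarith
    · intro A hA
      have h0 := (hμ₂ 0).1.2 A hA; have h1 := (hμ₂ 1).1.2 A hA
      have h2 := (hμ₂ 2).1.2 A hA
      simp only [hψdef]; linarith
  have hψsupp : suppOf 𝒮 ψ = ⋃ i, suppOf 𝒮 (μ₂ i) := by
    ext A
    simp only [suppOf, Set.mem_iUnion, Set.mem_setOf_eq]
    constructor
    · rintro ⟨hA, hpos⟩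
      have h0 := (hμ₂ 0).1.1 A hA; have h1 := (hμ₂ 1).1.1 A hA
      have h2 := (hμ₂ 2).1.1 A hA
      simp only [hψdef] at hpos
      by_contra hcon
      push_neg at hcon
      have e0 : μ₂ 0 A ≤ 0 := hcon 0 hA
      have e1 : μ₂ 1 A ≤ 0 := hcon 1 hA
      have e2 : μ₂ 2 A ≤ 0 := hcon 2 hA
      linarith
    · rintro ⟨i, hA, hpos⟩
      refine ⟨hA, ?_⟩
      have h0 := (hμ₂ 0).1.1 A hA; have h1 := (hμ₂ 1).1.1 A hA
      have h2 := (hμ₂ 2).1.1 A hA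
      have hi3 : i = 0 ∨ i = 1 ∨ i = 2 := by fin_cases i <;> decide
      simp only [hψdef]
      rcases hi3 with rfl | rfl | rfl <;> linarith
  have hψB : memB 𝒮 α ψ := by
    refine ⟨hψH, fun A hA B hB hUn => ?_⟩
    rw [hψsupp] at hA hB
    obtain ⟨l, hAl, hBl⟩ := hcommon A hA B hB
    exact (hμ₂ l).2 A hAl B hBl hUn
  -- the split count of ψ
  have hSPU : SPairs (⋃ i, suppOf 𝒮 (μ₂ i)) =
      SPairs (suppOf 𝒮 (μ₂ 0)) ∪ SPairs (suppOf 𝒮 (μ₂ 1)) ∪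
        SPairs (suppOf 𝒮 (μ₂ 2)) := by
    apply Set.Subset.antisymm
    · rintro p ⟨A, hA, hAc, rfl⟩
      obtain ⟨l, hAl, hAcl⟩ := hcommon A hA Aᶜ hAc
      have hmem : ({A, Aᶜ} : Set (Set X)) ∈ SPairs (suppOf 𝒮 (μ₂ l)) :=
        ⟨A, hAl, hAcl, rfl⟩
      have hl3 : l = 0 ∨ l = 1 ∨ l = 2 := by fin_cases l <;> decide
      rcases hl3 with rfl | rfl | rfl
      · exact Or.inl (Or.inl hmem)
      · exact Or.inl (Or.inr hmem)
      · exact Or.inr hmem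
    · refine Set.union_subset (Set.union_subset ?_ ?_) ?_
      · exact SPairs_mono (Set.subset_iUnion (fun i => suppOf 𝒮 (μ₂ i)) 0)
      · exact SPairs_mono (Set.subset_iUnion (fun i => suppOf 𝒮 (μ₂ i)) 1)
      · exact SPairs_mono (Set.subset_iUnion (fun i => suppOf 𝒮 (μ₂ i)) 2)
  have i01 : SPairs (suppOf 𝒮 (μ₂ 0)) ∩ SPairs (suppOf 𝒮 (μ₂ 1)) =
      SPairs (suppOf 𝒮 (μ₁ 2)) := by
    rw [hQeq 0 1 2 (by decide) (by decide) (by decide), SPairs_inter]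
  have c01 := Set.ncard_union_add_ncard_inter (SPairs (suppOf 𝒮 (μ₂ 0)))
    (SPairs (suppOf 𝒮 (μ₂ 1))) (hfin2 0) (hfin2 1)
  rw [i01, hk₁' 2, hk₂' 0, hk₂' 1] at c01
  have i2 : (SPairs (suppOf 𝒮 (μ₂ 0)) ∪ SPairs (suppOf 𝒮 (μ₂ 1))) ∩
      SPairs (suppOf 𝒮 (μ₂ 2)) =
      SPairs (suppOf 𝒮 (μ₁ 1)) ∪ SPairs (suppOf 𝒮 (μ₁ 0)) := by
    rw [Set.union_inter_distrib_right,
      hQeq 0 2 1 (by decide) (by decide) (by decide),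
      hQeq 1 2 0 (by decide) (by decide) (by decide), SPairs_inter, SPairs_inter]
  have iQQ : SPairs (suppOf 𝒮 (μ₁ 1)) ∩ SPairs (suppOf 𝒮 (μ₁ 0)) =
      SPairs (suppOf 𝒮 μ) := by
    have hset : suppOf 𝒮 (μ₁ 1) ∩ suppOf 𝒮 (μ₁ 0) = suppOf 𝒮 μ := by
      rw [hQeq 0 2 1 (by decide) (by decide) (by decide),
        hQeq 1 2 0 (by decide) (by decide) (by decide),
        hPeq 0 2 1 (by decide) (by decide) (by decide)]
      ext x
      constructor
      · rintro ⟨⟨h1, h2⟩, h3, -⟩; exact ⟨⟨h1, h2⟩, h3⟩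
      · rintro ⟨⟨h1, h2⟩, h3⟩; exact ⟨⟨h1, h2⟩, h3, h2⟩
    rw [← SPairs_inter, hset]
  have cQQ := Set.ncard_union_add_ncard_inter (SPairs (suppOf 𝒮 (μ₁ 1)))
    (SPairs (suppOf 𝒮 (μ₁ 0))) (hfin1 1) (hfin1 0)
  rw [iQQ, hk₁' 1, hk₁' 0, hk] at cQQ
  have cAll := Set.ncard_union_add_ncard_inter
    (SPairs (suppOf 𝒮 (μ₂ 0)) ∪ SPairs (suppOf 𝒮 (μ₂ 1)))
    (SPairs (suppOf 𝒮 (μ₂ 2))) ((hfin2 0).union (hfin2 1)) (hfin2 2)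
  rw [i2, hk₂' 2] at cAll
  have hfinal : (splitsIn 𝒮 ψ).ncard = k + 3 := by
    rw [splitsIn_eq_SPairs hcompl, hψsupp, hSPU]
    omega
  exact ⟨ψ, hψB, hψsupp, hfinal, fun i => by
    rw [hψsupp]; exact Set.subset_iUnion (fun i => suppOf 𝒮 (μ₂ i)) i⟩
end
end
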